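/- arXiv:2504.17870 — 5 statements merged into one kernel-verified Lean document; each statement's English description precedes it below -/
import Mathlib

section
/- Let (𝔤,ω) be a symplectic Lie algebra of dimension 2m and let d = ∂₊ + ω∧∂₋ be the Tseng–Yau decomposition of the exterior derivative on primitive forms. For any 1-form α ∈ 𝔤*, one has dΛ_ω d(ω ∧ α) = 0, where Λ_ω is contraction with ω. Consequently the operator dΛ_ωd applied to any 3-form on a symplectic Lie algebra has image contained in the primitive part. -/
section

variable {𝔤 : Type*} [LieRing 𝔤] [LieAlgebra ℝ 𝔤]

/-- The Chevalley–Eilenberg differential of a 2-cochain, at the level of functions: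
`(dβ)(x,y,z) = −β([x,y],z) + β([x,z],y) − β([y,z],x)`. -/
def ceD2 (f : 𝔤 → 𝔤 → ℝ) : 𝔤 → 𝔤 → 𝔤 → ℝ :=
  fun x y z => -f ⁅x, y⁆ z + f ⁅x, z⁆ y - f ⁅y, z⁆ x

/-- The Chevalley–Eilenberg differential of a 3-cochain, at the level of functions:
`(dγ)(x₀,…,x₃) = Σ_{i<j} (−1)^{i+j} γ([xᵢ,xⱼ], x₀,…,x̂ᵢ,…,x̂ⱼ,…,x₃)`. -/
def ceD3 (f : 𝔤 → 𝔤 → 𝔤 → ℝ) : 𝔤 → 𝔤 → 𝔤 → 𝔤 → ℝ :=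
  fun w x y z => -f ⁅w, x⁆ y z + f ⁅w, y⁆ x z - f ⁅w, z⁆ x y
    - f ⁅x, y⁆ w z + f ⁅x, z⁆ w y - f ⁅y, z⁆ w x

/-- The dual Lefschetz operator `Λ_ω` (contraction with `ω`) on 4-cochains, computed in
a Darboux basis `e = (a₁,…,a_m,b₁,…,b_m)`: `(Λγ)(x,y) = Σᵢ γ(aᵢ,bᵢ,x,y)`. -/
noncomputable def lefschetzContract {m : ℕ} (e : Module.Basis (Fin m ⊕ Fin m) ℝ 𝔤)
    (g : 𝔤 → 𝔤 → 𝔤 → 𝔤 → ℝ) : 𝔤 → 𝔤 → ℝ :=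
  fun x y => ∑ i : Fin m, g (e (Sum.inl i)) (e (Sum.inr i)) x y

/-- The 3-form `ω ∧ α`, for a 2-form `ω` and a 1-form `α`, at the level of functions. -/
def wedgeTwoOne (ω : 𝔤 [⋀^Fin 2]→ₗ[ℝ] ℝ) (α : 𝔤 →ₗ[ℝ] ℝ) : 𝔤 → 𝔤 → 𝔤 → ℝ :=
  fun x y z => ω ![x, y] * α z - ω ![x, z] * α y + ω ![y, z] * α x

set_option linter.unusedSectionVars false
set_option maxHeartbeats 1600000

/- ============ auxiliary lemmas ============ -/

private lemma upd2_0 (x y z : 𝔤) : Function.update (![x, y] : Fin 2 → 𝔤) 0 z = ![z, y] := by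
  funext i; fin_cases i <;> simp

private lemma upd2_1 (x y z : 𝔤) : Function.update (![x, y] : Fin 2 → 𝔤) 1 z = ![x, z] := by
  funext i; fin_cases i <;> simp

private lemma upd3_0 (u v w z : 𝔤) : Function.update (![u, v, w] : Fin 3 → 𝔤) 0 z = ![z, v, w] := by
  funext i; fin_cases i <;> simp

private lemma upd3_1 (u v w z : 𝔤) : Function.update (![u, v, w] : Fin 3 → 𝔤) 1 z = ![u, z, w] := by
  funext i; fin_cases i <;> simp

private lemma upd3_2 (u v w z : 𝔤) : Function.update (![u, v, w] : Fin 3 → 𝔤) 2 z = ![u, v, z] := by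
  funext i; fin_cases i <;> simp

private lemma sw2 (x y : 𝔤) : (![x, y] : Fin 2 → 𝔤) ∘ Equiv.swap 0 1 = ![y, x] := by
  funext i; fin_cases i <;> simp [Equiv.swap_apply_def]

private lemma sw3_01 (u v w : 𝔤) : (![u, v, w] : Fin 3 → 𝔤) ∘ Equiv.swap 0 1 = ![v, u, w] := by
  funext i; fin_cases i <;> simp [Equiv.swap_apply_def]

private lemma sw3_12 (u v w : 𝔤) : (![u, v, w] : Fin 3 → 𝔤) ∘ Equiv.swap 1 2 = ![u, w, v] := by
  funext i; fin_cases i <;> simp [Equiv.swap_apply_def]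

section OmPhi
variable (ω : 𝔤 [⋀^Fin 2]→ₗ[ℝ] ℝ) (φ : 𝔤 [⋀^Fin 3]→ₗ[ℝ] ℝ)

private lemma om_sw (x y : 𝔤) : ω ![y, x] = -ω ![x, y] := by
  have h := ω.map_swap (v := ![x, y]) (i := 0) (j := 1) (by decide)
  rw [sw2] at h; exact h

private lemma om_add1 (x x' y : 𝔤) : ω ![x + x', y] = ω ![x, y] + ω ![x', y] := by
  have h := ω.map_update_add (![x, y]) 0 x x'
  rwa [upd2_0, upd2_0, upd2_0] at h

private lemma om_add2 (x y y' : 𝔤) : ω ![x, y + y'] = ω ![x, y] + ω ![x, y'] := by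
  have h := ω.map_update_add (![x, y]) 1 y y'
  rwa [upd2_1, upd2_1, upd2_1] at h

private lemma om_smul1 (c : ℝ) (x y : 𝔤) : ω ![c • x, y] = c * ω ![x, y] := by
  have h := ω.map_update_smul (![x, y]) 0 c x
  rwa [upd2_0, upd2_0, smul_eq_mul] at h

private lemma om_smul2 (c : ℝ) (x y : 𝔤) : ω ![x, c • y] = c * ω ![x, y] := by
  have h := ω.map_update_smul (![x, y]) 1 c y
  rwa [upd2_1, upd2_1, smul_eq_mul] at h

private lemma om_neg2 (x y : 𝔤) : ω ![x, -y] = -ω ![x, y] := by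
  have h := om_smul2 ω (-1) x y
  rwa [neg_one_smul, neg_one_mul] at h

private lemma ph_add1 (u u' v w : 𝔤) : φ ![u + u', v, w] = φ ![u, v, w] + φ ![u', v, w] := by
  have h := φ.map_update_add (![u, v, w]) 0 u u'
  rwa [upd3_0, upd3_0, upd3_0] at h

private lemma ph_add2 (u v v' w : 𝔤) : φ ![u, v + v', w] = φ ![u, v, w] + φ ![u, v', w] := by
  have h := φ.map_update_add (![u, v, w]) 1 v v'
  rwa [upd3_1, upd3_1, upd3_1] at h

private lemma ph_add3 (u v w w' : 𝔤) : φ ![u, v, w + w'] = φ ![u, v, w] + φ ![u, v, w'] := by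
  have h := φ.map_update_add (![u, v, w]) 2 w w'
  rwa [upd3_2, upd3_2, upd3_2] at h

private lemma ph_smul1 (c : ℝ) (u v w : 𝔤) : φ ![c • u, v, w] = c * φ ![u, v, w] := by
  have h := φ.map_update_smul (![u, v, w]) 0 c u
  rwa [upd3_0, upd3_0, smul_eq_mul] at h

private lemma ph_smul2 (c : ℝ) (u v w : 𝔤) : φ ![u, c • v, w] = c * φ ![u, v, w] := by
  have h := φ.map_update_smul (![u, v, w]) 1 c v
  rwa [upd3_1, upd3_1, smul_eq_mul] at h

private lemma ph_smul3 (c : ℝ) (u v w : 𝔤) : φ ![u, v, c • w] = c * φ ![u, v, w] := by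
  have h := φ.map_update_smul (![u, v, w]) 2 c w
  rwa [upd3_2, upd3_2, smul_eq_mul] at h

private lemma ph_neg1 (u v w : 𝔤) : φ ![-u, v, w] = -φ ![u, v, w] := by
  have h := ph_smul1 φ (-1) u v w
  rwa [neg_one_smul, neg_one_mul] at h

private lemma ph_sub1 (u u' v w : 𝔤) : φ ![u - u', v, w] = φ ![u, v, w] - φ ![u', v, w] := by
  rw [sub_eq_add_neg, ph_add1, ph_neg1, sub_eq_add_neg]

private lemma ph_sw12 (u v w : 𝔤) : φ ![v, u, w] = -φ ![u, v, w] := by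
  have h := φ.map_swap (v := ![u, v, w]) (i := 0) (j := 1) (by decide)
  rw [sw3_01] at h; exact h

private lemma ph_sw23 (u v w : 𝔤) : φ ![u, w, v] = -φ ![u, v, w] := by
  have h := φ.map_swap (v := ![u, v, w]) (i := 1) (j := 2) (by decide)
  rw [sw3_12] at h; exact h

private lemma ph12 (u v w : 𝔤) : φ ![u, v, w] + φ ![v, u, w] = 0 := by
  rw [ph_sw12]; ring

private lemma ph23 (u v w : 𝔤) : φ ![u, v, w] + φ ![u, w, v] = 0 := by
  rw [ph_sw23]; ring

private lemma phsk1 (u v s t : 𝔤) : φ ![⁅u, v⁆, s, t] + φ ![⁅v, u⁆, s, t] = 0 := by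
  have h : (⁅v, u⁆ : 𝔤) = -⁅u, v⁆ := by rw [← lie_skew]
  rw [h, ph_neg1]; ring

private lemma phsk1in (u v w s t : 𝔤) :
    φ ![⁅u, ⁅v, w⁆⁆, s, t] + φ ![⁅u, ⁅w, v⁆⁆, s, t] = 0 := by
  have h : (⁅w, v⁆ : 𝔤) = -⁅v, w⁆ := by rw [← lie_skew]
  rw [h, lie_neg, ph_neg1]; ring

private lemma phjac (u v w s t : 𝔤) :
    φ ![⁅⁅u, v⁆, w⁆, s, t] - φ ![⁅u, ⁅v, w⁆⁆, s, t] + φ ![⁅v, ⁅u, w⁆⁆, s, t] = 0 := by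
  rw [lie_lie, ph_sub1]; ring

private lemma phjacR (u v w s t : 𝔤) :
    φ ![⁅u, ⁅v, w⁆⁆, s, t] + φ ![⁅v, ⁅w, u⁆⁆, s, t] + φ ![⁅w, ⁅u, v⁆⁆, s, t] = 0 := by
  have h : (⁅u, ⁅v, w⁆⁆ : 𝔤) + (⁅v, ⁅w, u⁆⁆ + ⁅w, ⁅u, v⁆⁆) = 0 := by
    rw [← add_assoc]; exact lie_jacobi u v w
  rw [eq_neg_of_add_eq_zero_left h, ph_neg1, ph_add1]; ring

/- ============ the 4-cochain g = dφ and its properties ============ -/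

private lemma gphi_def (w x y z : 𝔤) :
    ceD3 (fun p q r => φ ![p, q, r]) w x y z =
      -φ ![⁅w, x⁆, y, z] + φ ![⁅w, y⁆, x, z] - φ ![⁅w, z⁆, x, y]
        - φ ![⁅x, y⁆, w, z] + φ ![⁅x, z⁆, w, y] - φ ![⁅y, z⁆, w, x] := rfl

private lemma gsw12 (u v s t : 𝔤) :
    ceD3 (fun p q r => φ ![p, q, r]) v u s t = -ceD3 (fun p q r => φ ![p, q, r]) u v s t := by
  simp only [gphi_def]
  linear_combination - phsk1 φ (u) (v) (s) (t) - ph23 φ (⁅s, t⁆) (u) (v)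

private lemma gsw23 (u v s t : 𝔤) :
    ceD3 (fun p q r => φ ![p, q, r]) u s v t = -ceD3 (fun p q r => φ ![p, q, r]) u v s t := by
  simp only [gphi_def]
  linear_combination - phsk1 φ (t) (u) (v) (s) + ph23 φ (⁅t, u⁆) (s) (v) - phsk1 φ (s) (v) (u) (t) - phsk1 φ (t) (u) (s) (v)

private lemma g_add1 (u u' v s t : 𝔤) :
    ceD3 (fun p q r => φ ![p, q, r]) (u + u') v s t
      = ceD3 (fun p q r => φ ![p, q, r]) u v s t + ceD3 (fun p q r => φ ![p, q, r]) u' v s t := by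
  simp only [gphi_def, add_lie, lie_add, ph_add1, ph_add2, ph_add3]; ring

private lemma g_smul1 (c : ℝ) (u v s t : 𝔤) :
    ceD3 (fun p q r => φ ![p, q, r]) (c • u) v s t
      = c * ceD3 (fun p q r => φ ![p, q, r]) u v s t := by
  simp only [gphi_def, smul_lie, lie_smul, ph_smul1, ph_smul2, ph_smul3]; ring

private lemma g_add2 (u v v' s t : 𝔤) :
    ceD3 (fun p q r => φ ![p, q, r]) u (v + v') s t
      = ceD3 (fun p q r => φ ![p, q, r]) u v s t + ceD3 (fun p q r => φ ![p, q, r]) u v' s t := by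
  simp only [gphi_def, add_lie, lie_add, ph_add1, ph_add2, ph_add3]; ring

private lemma g_smul2 (c : ℝ) (u v s t : 𝔤) :
    ceD3 (fun p q r => φ ![p, q, r]) u (c • v) s t
      = c * ceD3 (fun p q r => φ ![p, q, r]) u v s t := by
  simp only [gphi_def, smul_lie, lie_smul, ph_smul1, ph_smul2, ph_smul3]; ring

private lemma g_add3 (u v s s' t : 𝔤) :
    ceD3 (fun p q r => φ ![p, q, r]) u v (s + s') t
      = ceD3 (fun p q r => φ ![p, q, r]) u v s t + ceD3 (fun p q r => φ ![p, q, r]) u v s' t := by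
  simp only [gphi_def, add_lie, lie_add, ph_add1, ph_add2, ph_add3]; ring

private lemma g_smul3 (c : ℝ) (u v s t : 𝔤) :
    ceD3 (fun p q r => φ ![p, q, r]) u v (c • s) t
      = c * ceD3 (fun p q r => φ ![p, q, r]) u v s t := by
  simp only [gphi_def, smul_lie, lie_smul, ph_smul1, ph_smul2, ph_smul3]; ring

private lemma g_neg2 (u v s t : 𝔤) :
    ceD3 (fun p q r => φ ![p, q, r]) u (-v) s t = -ceD3 (fun p q r => φ ![p, q, r]) u v s t := by
  have h := g_smul2 φ (-1) u v s t
  rwa [neg_one_smul, neg_one_mul] at h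

private lemma g_neg3 (u v s t : 𝔤) :
    ceD3 (fun p q r => φ ![p, q, r]) u v (-s) t = -ceD3 (fun p q r => φ ![p, q, r]) u v s t := by
  have h := g_smul3 φ (-1) u v s t
  rwa [neg_one_smul, neg_one_mul] at h

private lemma masterM (a b p q x : 𝔤) :
    (-ceD3 (fun p' q' r => φ ![p', q', r]) p q ⁅a, b⁆ x
      + ceD3 (fun p' q' r => φ ![p', q', r]) p q ⁅a, x⁆ b
      - ceD3 (fun p' q' r => φ ![p', q', r]) p q ⁅b, x⁆ a)
    + (-ceD3 (fun p' q' r => φ ![p', q', r]) a b ⁅p, q⁆ x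
      + ceD3 (fun p' q' r => φ ![p', q', r]) a b ⁅p, x⁆ q
      - ceD3 (fun p' q' r => φ ![p', q', r]) a b ⁅q, x⁆ p)
    + (ceD3 (fun p' q' r => φ ![p', q', r]) ⁅a, p⁆ b q x
      - ceD3 (fun p' q' r => φ ![p', q', r]) ⁅a, q⁆ b p x
      - ceD3 (fun p' q' r => φ ![p', q', r]) ⁅b, p⁆ a q x
      + ceD3 (fun p' q' r => φ ![p', q', r]) ⁅b, q⁆ a p x) = 0 := by
  simp only [gphi_def]
  linear_combination ph12 φ (⁅a, b⁆) (⁅p, q⁆) (x) + phsk1in φ (b) (a) (p) (q) (x) + ph23 φ (⁅p, x⁆) (⁅a, b⁆) (q) - ph12 φ (⁅a, b⁆) (⁅p, x⁆) (q) - phsk1in φ (b) (a) (q) (p) (x) - ph23 φ (⁅q, x⁆) (⁅a, b⁆) (p) + ph12 φ (⁅a, b⁆) (⁅q, x⁆) (p) + phjac φ (a) (b) (x) (p) (q) - ph12 φ (⁅a, x⁆) (⁅p, q⁆) (b) + ph23 φ (⁅p, ⁅a, x⁆⁆) (b) (q) - phsk1 φ (b) (p) (q) (⁅a, x⁆) +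 ph23 φ (⁅b, p⁆) (⁅a, x⁆) (q) - ph12 φ (⁅a, x⁆) (⁅b, p⁆) (q) - ph23 φ (⁅q, ⁅a, x⁆⁆) (b) (p) + phsk1 φ (b) (q) (p) (⁅a, x⁆) - ph23 φ (⁅b, q⁆) (⁅a, x⁆) (p) + ph12 φ (⁅a, x⁆) (⁅b, q⁆) (p) - phjac φ (a) (x) (b) (p) (q) + phjacR φ (x) (a) (b) (p) (q) + ph12 φ (⁅b, x⁆) (⁅p, q⁆) (a) - ph23 φ (⁅p, ⁅b, x⁆⁆) (a) (q) + phsk1 φ (a) (p) (q) (⁅b, x⁆) - ph23 φ (⁅a, p⁆) (⁅b, x⁆) (q) + ph23 φ (⁅q, ⁅b, x⁆⁆) (a) (p) - phsk1 φ (a) (q) (p) (⁅b, x⁆) + ph23 φ (⁅a, q⁆) (⁅b, x⁆) (p) + phjac φ (b) (x) (a) (p) (q) - phjacR φ (x) (b) (a) (p) (q) + ph23 φ (⁅a, x⁆) (⁅p, q⁆) (b) - ph23 φ (⁅b, x⁆) (⁅p, q⁆) (a) + phjac φ (p) (q) (x) (a) (b) - ph23 φ (⁅a, q⁆) (⁅p,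 x⁆) (b) + ph23 φ (⁅b, q⁆) (⁅p, x⁆) (a) - phjac φ (p) (x) (q) (a) (b) + phjacR φ (x) (p) (q) (a) (b) + ph23 φ (⁅a, p⁆) (⁅q, x⁆) (b) - ph23 φ (⁅b, p⁆) (⁅q, x⁆) (a) + phjac φ (q) (x) (p) (a) (b) - phjacR φ (x) (q) (p) (a) (b) - phjac φ (a) (p) (b) (q) (x) + phjac φ (a) (p) (q) (b) (x) - phjac φ (a) (p) (x) (b) (q) - ph12 φ (⁅a, p⁆) (⁅b, q⁆) (x) + ph12 φ (⁅a, p⁆) (⁅b, x⁆) (q) - ph12 φ (⁅a, p⁆) (⁅q, x⁆) (b) + phjac φ (a) (q) (b) (p) (x) - phjac φ (a) (q) (p) (b) (x) - phsk1in φ (a) (p) (q) (b) (x) + phjacR φ (q) (a) (p) (b) (x) - phsk1in φ (p) (a) (q) (b) (x) + phjac φ (a) (q) (x) (b) (p) + ph12 φ (⁅a, q⁆) (⁅b, p⁆) (x) - ph12 φ (⁅a, q⁆) (⁅b, x⁆) (p) + ph12 φ (⁅a, q⁆) (⁅p, x⁆) (b) + phjac φ (b) (p) (a) (q) (x) - phjacR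 φ (p) (b) (a) (q) (x) - phjac φ (b) (p) (q) (a) (x) + phjac φ (b) (p) (x) (a) (q) + ph12 φ (⁅b, p⁆) (⁅q, x⁆) (a) - phjac φ (b) (q) (a) (p) (x) + phjacR φ (q) (b) (a) (p) (x) + phjac φ (b) (q) (p) (a) (x) + phsk1in φ (b) (p) (q) (a) (x) - phjacR φ (q) (b) (p) (a) (x) + phsk1in φ (p) (b) (q) (a) (x) - phjac φ (b) (q) (x) (a) (p) - ph12 φ (⁅b, q⁆) (⁅p, x⁆) (a)

end OmPhi

/- ============ the contraction (reproducing) lemmas ============ -/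

section Contract
variable {m : ℕ} (ω : 𝔤 [⋀^Fin 2]→ₗ[ℝ] ℝ) (e : Module.Basis (Fin m ⊕ Fin m) ℝ 𝔤)

private lemma repro
    (hD1 : ∀ i j, ω ![e (Sum.inl i), e (Sum.inr j)] = if i = j then 1 else 0)
    (hD2 : ∀ i j, ω ![e (Sum.inl i), e (Sum.inl j)] = 0)
    (hD3 : ∀ i j, ω ![e (Sum.inr i), e (Sum.inr j)] = 0)
    (f : 𝔤 →ₗ[ℝ] ℝ) (u : 𝔤) :
    ∑ i : Fin m, (ω ![u, e (Sum.inr i)] * f (e (Sum.inl i))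
      + ω ![e (Sum.inl i), u] * f (e (Sum.inr i))) = f u := by
  let L : 𝔤 →ₗ[ℝ] ℝ :=
  { toFun := fun v => ∑ i : Fin m, (ω ![v, e (Sum.inr i)] * f (e (Sum.inl i))
      + ω ![e (Sum.inl i), v] * f (e (Sum.inr i)))
    map_add' := fun x y => by
      rw [← Finset.sum_add_distrib]
      refine Finset.sum_congr rfl fun i _ => ?_
      rw [om_add1, om_add2]; ring
    map_smul' := fun c x => by
      simp only [RingHom.id_apply, smul_eq_mul]
      rw [Finset.mul_sum]
      refine Finset.sum_congr rfl fun i _ => ?_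
      rw [om_smul1, om_smul2]; ring }
  have hL : L = f := by
    refine e.ext fun s => ?_
    cases s with
    | inl j =>
        show ∑ i : Fin m, (ω ![e (Sum.inl j), e (Sum.inr i)] * f (e (Sum.inl i))
          + ω ![e (Sum.inl i), e (Sum.inl j)] * f (e (Sum.inr i))) = f (e (Sum.inl j))
        simp only [hD1, hD2, zero_mul, add_zero, ite_mul, one_mul]
        simp
    | inr j =>
        show ∑ i : Fin m, (ω ![e (Sum.inr j), e (Sum.inr i)] * f (e (Sum.inl i))
          + ω ![e (Sum.inl i), e (Sum.inr j)] * f (e (Sum.inr i))) = f (e (Sum.inr j))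
        simp only [hD1, hD3, zero_mul, zero_add, ite_mul, one_mul]
        simp
  exact DFunLike.congr_fun hL u

private lemma contr1
    (hD1 : ∀ i j, ω ![e (Sum.inl i), e (Sum.inr j)] = if i = j then 1 else 0)
    (hD2 : ∀ i j, ω ![e (Sum.inl i), e (Sum.inl j)] = 0)
    (hD3 : ∀ i j, ω ![e (Sum.inr i), e (Sum.inr j)] = 0)
    (f : 𝔤 → ℝ)
    (hadd : ∀ p q : 𝔤, f (p + q) = f p + f q)
    (hsmul : ∀ (c : ℝ) (p : 𝔤), f (c • p) = c * f p) (u : 𝔤) :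
    ∑ s : Fin m ⊕ Fin m,
      ω ![u, Sum.elim (fun i => e (Sum.inr i)) (fun i => -e (Sum.inl i)) s] * f (e s) = f u := by
  have hf : IsLinearMap ℝ f := ⟨hadd, fun c x => by rw [hsmul]; rfl⟩
  have key := repro ω e hD1 hD2 hD3 (IsLinearMap.mk' f hf) u
  simp only [IsLinearMap.mk'_apply] at key
  rw [Fintype.sum_sum_type]
  simp only [Sum.elim_inl, Sum.elim_inr]
  have h2 : ∀ i, ω ![u, -e (Sum.inl i)] * f (e (Sum.inr i))
      = ω ![e (Sum.inl i), u] * f (e (Sum.inr i)) := fun i => by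
    rw [om_neg2, om_sw ω u (e (Sum.inl i))]
  simp only [h2]
  rw [← Finset.sum_add_distrib]
  exact key

private lemma contr3
    (hD1 : ∀ i j, ω ![e (Sum.inl i), e (Sum.inr j)] = if i = j then 1 else 0)
    (hD2 : ∀ i j, ω ![e (Sum.inl i), e (Sum.inl j)] = 0)
    (hD3 : ∀ i j, ω ![e (Sum.inr i), e (Sum.inr j)] = 0)
    (f : 𝔤 → ℝ)
    (hadd : ∀ p q : 𝔤, f (p + q) = f p + f q)
    (hsmul : ∀ (c : ℝ) (p : 𝔤), f (c • p) = c * f p) (u : 𝔤) :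
    ∑ s : Fin m ⊕ Fin m,
      ω ![u, e s] * f (Sum.elim (fun i => e (Sum.inr i)) (fun i => -e (Sum.inl i)) s) = -f u := by
  have hf : IsLinearMap ℝ f := ⟨hadd, fun c x => by rw [hsmul]; rfl⟩
  have key := repro ω e hD1 hD2 hD3 (IsLinearMap.mk' f hf) u
  simp only [IsLinearMap.mk'_apply] at key
  have hneg : ∀ p, f (-p) = -f p := fun p => by
    have h := hsmul (-1) p; rwa [neg_one_smul, neg_one_mul] at h
  rw [Fintype.sum_sum_type]
  simp only [Sum.elim_inl, Sum.elim_inr]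
  have h1 : ∀ i, ω ![u, e (Sum.inl i)] * f (e (Sum.inr i))
      = -(ω ![e (Sum.inl i), u] * f (e (Sum.inr i))) := fun i => by
    rw [om_sw ω (e (Sum.inl i)) u]; ring
  have h2 : ∀ i, ω ![u, e (Sum.inr i)] * f (-e (Sum.inl i))
      = -(ω ![u, e (Sum.inr i)] * f (e (Sum.inl i))) := fun i => by
    rw [hneg]; ring
  simp only [h1, h2]
  rw [Finset.sum_neg_distrib, Finset.sum_neg_distrib, ← neg_add, ← Finset.sum_add_distrib]
  rw [neg_inj, ← key]
  exact Finset.sum_congr rfl fun i _ => by ring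

end Contract

/- ============ part 1 pointwise lemma ============ -/

private lemma keyP1 (ω : 𝔤 [⋀^Fin 2]→ₗ[ℝ] ℝ) (α : 𝔤 →ₗ[ℝ] ℝ)
    (hclosed : ∀ x y z : 𝔤,
      -ω ![⁅x, y⁆, z] + ω ![⁅x, z⁆, y] - ω ![⁅y, z⁆, x] = 0)
    (a b x y : 𝔤) :
    ceD3 (wedgeTwoOne ω α) a b x y =
      -(ω ![x, y] * α ⁅a, b⁆) + ω ![b, y] * α ⁅a, x⁆ - ω ![b, x] * α ⁅a, y⁆
        - ω ![a, y] * α ⁅b, x⁆ + ω ![a, x] * α ⁅b, y⁆ - ω ![a, b] * α ⁅x, y⁆ := by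
  simp only [ceD3, wedgeTwoOne]
  linear_combination (-α x) * hclosed a b y + α y * hclosed a b x
    + α b * hclosed a x y + (-α a) * hclosed b x y

private def adApply (α : 𝔤 →ₗ[ℝ] ℝ) (x : 𝔤) : 𝔤 →ₗ[ℝ] ℝ :=
  { toFun := fun w => α ⁅w, x⁆
    map_add' := fun a b => by
      show α ⁅a + b, x⁆ = α ⁅a, x⁆ + α ⁅b, x⁆
      rw [add_lie, map_add]
    map_smul' := fun c a => by
      show α ⁅c • a, x⁆ = (RingHom.id ℝ) c • α ⁅a, x⁆
      rw [smul_lie, map_smul]; rfl }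

private lemma adApply_apply (α : 𝔤 →ₗ[ℝ] ℝ) (x w : 𝔤) : adApply α x w = α ⁅w, x⁆ := rfl


/- ============ part 2 : the contraction chain ============ -/

section Chain
variable {m : ℕ} (ω : 𝔤 [⋀^Fin 2]→ₗ[ℝ] ℝ) (φ : 𝔤 [⋀^Fin 3]→ₗ[ℝ] ℝ)

private lemma gcyc (a b c t : 𝔤) : ceD3 (fun p q r => φ ![p, q, r]) c a b t = ceD3 (fun p q r => φ ![p, q, r]) a b c t := by
  rw [gsw12 φ a c b t, gsw23 φ a b c t, neg_neg]

private lemma chainU (x : 𝔤) (SA SH : Fin m ⊕ Fin m → 𝔤)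
    (hclosed : ∀ x y z : 𝔤,
      -ω ![⁅x, y⁆, z] + ω ![⁅x, z⁆, y] - ω ![⁅y, z⁆, x] = 0)
    (C1 : ∀ f : 𝔤 → ℝ, (∀ p q : 𝔤, f (p + q) = f p + f q) →
      (∀ (c : ℝ) (p : 𝔤), f (c • p) = c * f p) →
      ∀ u : 𝔤, ∑ s : Fin m ⊕ Fin m, ω ![u, SH s] * f (SA s) = f u) :
    (∑ u : Fin m ⊕ Fin m, ∑ v : Fin m ⊕ Fin m, ceD3 (fun p q r => φ ![p, q, r]) ⁅SH u, SH v⁆ (SA v) (SA u) x) = 0 := by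
  have hcl : ∀ P Q R : 𝔤, ω ![⁅P, Q⁆, R] = ω ![⁅P, R⁆, Q] - ω ![⁅Q, R⁆, P] :=
    fun P Q R => by linarith [hclosed P Q R]
  have hexp : ∀ C y z : 𝔤, ceD3 (fun p q r => φ ![p, q, r]) C y z x = ∑ s : Fin m ⊕ Fin m, ω ![C, SH s] * ceD3 (fun p q r => φ ![p, q, r]) (SA s) y z x :=
    fun C y z => (C1 (fun w => ceD3 (fun p q r => φ ![p, q, r]) w y z x)
      (fun p q => g_add1 φ p q y z x) (fun c p => g_smul1 φ c p y z x) C).symm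
  have e1 : (∑ u : Fin m ⊕ Fin m, ∑ v : Fin m ⊕ Fin m, ceD3 (fun p q r => φ ![p, q, r]) ⁅SH u, SH v⁆ (SA v) (SA u) x)
      = (∑ u : Fin m ⊕ Fin m, ∑ v : Fin m ⊕ Fin m, ∑ s : Fin m ⊕ Fin m,
          (ω ![⁅SH u, SH s⁆, SH v] * ceD3 (fun p q r => φ ![p, q, r]) (SA s) (SA v) (SA u) x
            - ω ![⁅SH v, SH s⁆, SH u] * ceD3 (fun p q r => φ ![p, q, r]) (SA s) (SA v) (SA u) x)) := by
    refine Finset.sum_congr rfl fun u _ => Finset.sum_congr rfl fun v _ => ?_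
    rw [hexp ⁅SH u, SH v⁆ (SA v) (SA u)]
    refine Finset.sum_congr rfl fun s _ => ?_
    rw [hcl (SH u) (SH v) (SH s)]; ring
  have hY : (∑ u : Fin m ⊕ Fin m, ∑ v : Fin m ⊕ Fin m, ∑ s : Fin m ⊕ Fin m,
        ω ![⁅SH v, SH s⁆, SH u] * ceD3 (fun p q r => φ ![p, q, r]) (SA s) (SA v) (SA u) x)
      = -(∑ u : Fin m ⊕ Fin m, ∑ v : Fin m ⊕ Fin m, ∑ s : Fin m ⊕ Fin m,
        ω ![⁅SH u, SH s⁆, SH v] * ceD3 (fun p q r => φ ![p, q, r]) (SA s) (SA v) (SA u) x) := by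
    rw [Finset.sum_comm]
    rw [← Finset.sum_neg_distrib]
    refine Finset.sum_congr rfl fun u _ => ?_
    rw [← Finset.sum_neg_distrib]
    refine Finset.sum_congr rfl fun v _ => ?_
    rw [← Finset.sum_neg_distrib]
    refine Finset.sum_congr rfl fun s _ => ?_
    rw [gsw23 φ (SA s) (SA v) (SA u) x]; ring
  have hX : (∑ u : Fin m ⊕ Fin m, ∑ v : Fin m ⊕ Fin m, ∑ s : Fin m ⊕ Fin m,
        ω ![⁅SH u, SH s⁆, SH v] * ceD3 (fun p q r => φ ![p, q, r]) (SA s) (SA v) (SA u) x)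
      = -(∑ u : Fin m ⊕ Fin m, ∑ v : Fin m ⊕ Fin m, ceD3 (fun p q r => φ ![p, q, r]) ⁅SH u, SH v⁆ (SA v) (SA u) x) := by
    have swap1 : (∑ u : Fin m ⊕ Fin m, ∑ v : Fin m ⊕ Fin m, ∑ s : Fin m ⊕ Fin m,
          ω ![⁅SH u, SH s⁆, SH v] * ceD3 (fun p q r => φ ![p, q, r]) (SA s) (SA v) (SA u) x)
        = ∑ u : Fin m ⊕ Fin m, ∑ s : Fin m ⊕ Fin m, ∑ v : Fin m ⊕ Fin m,
          ω ![⁅SH u, SH s⁆, SH v] * ceD3 (fun p q r => φ ![p, q, r]) (SA s) (SA v) (SA u) x :=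
      Finset.sum_congr rfl fun u _ => Finset.sum_comm
    rw [swap1, ← Finset.sum_neg_distrib]
    refine Finset.sum_congr rfl fun u _ => ?_
    rw [← Finset.sum_neg_distrib]
    refine Finset.sum_congr rfl fun s _ => ?_
    have hc := C1 (fun y => ceD3 (fun p q r => φ ![p, q, r]) (SA s) y (SA u) x)
      (fun p q => g_add2 φ (SA s) p q (SA u) x) (fun c p => g_smul2 φ c (SA s) p (SA u) x)
      ⁅SH u, SH s⁆
    rw [hc, gsw12 φ ⁅SH u, SH s⁆ (SA s) (SA u) x]
  have e2 : (∑ u : Fin m ⊕ Fin m, ∑ v : Fin m ⊕ Fin m,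
        ceD3 (fun p q r => φ ![p, q, r]) ⁅SH u, SH v⁆ (SA v) (SA u) x)
      = (∑ u : Fin m ⊕ Fin m, ∑ v : Fin m ⊕ Fin m, ∑ s : Fin m ⊕ Fin m,
        ω ![⁅SH u, SH s⁆, SH v] * ceD3 (fun p q r => φ ![p, q, r]) (SA s) (SA v) (SA u) x)
      - (∑ u : Fin m ⊕ Fin m, ∑ v : Fin m ⊕ Fin m, ∑ s : Fin m ⊕ Fin m,
        ω ![⁅SH v, SH s⁆, SH u] * ceD3 (fun p q r => φ ![p, q, r]) (SA s) (SA v) (SA u) x) := by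
    rw [e1]; simp only [Finset.sum_sub_distrib]
  linarith [hY, hX, e2]

private lemma chainT (x : 𝔤) (SA SH : Fin m ⊕ Fin m → 𝔤)
    (hclosed : ∀ x y z : 𝔤,
      -ω ![⁅x, y⁆, z] + ω ![⁅x, z⁆, y] - ω ![⁅y, z⁆, x] = 0)
    (C1 : ∀ f : 𝔤 → ℝ, (∀ p q : 𝔤, f (p + q) = f p + f q) →
      (∀ (c : ℝ) (p : 𝔤), f (c • p) = c * f p) →
      ∀ u : 𝔤, ∑ s : Fin m ⊕ Fin m, ω ![u, SH s] * f (SA s) = f u)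
    (C3 : ∀ f : 𝔤 → ℝ, (∀ p q : 𝔤, f (p + q) = f p + f q) →
      (∀ (c : ℝ) (p : 𝔤), f (c • p) = c * f p) →
      ∀ u : 𝔤, ∑ s : Fin m ⊕ Fin m, ω ![u, SA s] * f (SH s) = -f u) :
    (∑ s : Fin m ⊕ Fin m, ∑ u : Fin m ⊕ Fin m, ceD3 (fun p q r => φ ![p, q, r]) ⁅SA s, SH u⁆ (SA u) (SH s) x) = 0 := by
  have hcl : ∀ P Q R : 𝔤, ω ![⁅P, Q⁆, R] = ω ![⁅P, R⁆, Q] - ω ![⁅Q, R⁆, P] :=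
    fun P Q R => by linarith [hclosed P Q R]
  have hexp : ∀ C y z : 𝔤, ceD3 (fun p q r => φ ![p, q, r]) C y z x = ∑ s : Fin m ⊕ Fin m, ω ![C, SH s] * ceD3 (fun p q r => φ ![p, q, r]) (SA s) y z x :=
    fun C y z => (C1 (fun w => ceD3 (fun p q r => φ ![p, q, r]) w y z x)
      (fun p q => g_add1 φ p q y z x) (fun c p => g_smul1 φ c p y z x) C).symm
  have hU := chainU ω φ x SA SH hclosed C1
  have e1 : (∑ s : Fin m ⊕ Fin m, ∑ u : Fin m ⊕ Fin m, ceD3 (fun p q r => φ ![p, q, r]) ⁅SA s, SH u⁆ (SA u) (SH s) x)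
      = (∑ s : Fin m ⊕ Fin m, ∑ u : Fin m ⊕ Fin m, ∑ v : Fin m ⊕ Fin m,
          (ω ![⁅SA s, SH v⁆, SH u] * ceD3 (fun p q r => φ ![p, q, r]) (SA v) (SA u) (SH s) x
            - ω ![⁅SH u, SH v⁆, SA s] * ceD3 (fun p q r => φ ![p, q, r]) (SA v) (SA u) (SH s) x)) := by
    refine Finset.sum_congr rfl fun s _ => Finset.sum_congr rfl fun u _ => ?_
    rw [hexp ⁅SA s, SH u⁆ (SA u) (SH s)]
    refine Finset.sum_congr rfl fun v _ => ?_
    rw [hcl (SA s) (SH u) (SH v)]; ring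
  have hP1 : (∑ s : Fin m ⊕ Fin m, ∑ u : Fin m ⊕ Fin m, ∑ v : Fin m ⊕ Fin m,
        ω ![⁅SA s, SH v⁆, SH u] * ceD3 (fun p q r => φ ![p, q, r]) (SA v) (SA u) (SH s) x)
      = -(∑ s : Fin m ⊕ Fin m, ∑ u : Fin m ⊕ Fin m, ceD3 (fun p q r => φ ![p, q, r]) ⁅SA s, SH u⁆ (SA u) (SH s) x) := by
    have swap1 : (∑ s : Fin m ⊕ Fin m, ∑ u : Fin m ⊕ Fin m, ∑ v : Fin m ⊕ Fin m,
          ω ![⁅SA s, SH v⁆, SH u] * ceD3 (fun p q r => φ ![p, q, r]) (SA v) (SA u) (SH s) x)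
        = ∑ s : Fin m ⊕ Fin m, ∑ v : Fin m ⊕ Fin m, ∑ u : Fin m ⊕ Fin m,
          ω ![⁅SA s, SH v⁆, SH u] * ceD3 (fun p q r => φ ![p, q, r]) (SA v) (SA u) (SH s) x :=
      Finset.sum_congr rfl fun s _ => Finset.sum_comm
    rw [swap1, ← Finset.sum_neg_distrib]
    refine Finset.sum_congr rfl fun s _ => ?_
    rw [← Finset.sum_neg_distrib]
    refine Finset.sum_congr rfl fun v _ => ?_
    have hc := C1 (fun y => ceD3 (fun p q r => φ ![p, q, r]) (SA v) y (SH s) x)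
      (fun p q => g_add2 φ (SA v) p q (SH s) x) (fun c p => g_smul2 φ c (SA v) p (SH s) x)
      ⁅SA s, SH v⁆
    rw [hc, gsw12 φ ⁅SA s, SH v⁆ (SA v) (SH s) x]
  have hP2 : (∑ s : Fin m ⊕ Fin m, ∑ u : Fin m ⊕ Fin m, ∑ v : Fin m ⊕ Fin m,
        ω ![⁅SH u, SH v⁆, SA s] * ceD3 (fun p q r => φ ![p, q, r]) (SA v) (SA u) (SH s) x)
      = -(∑ u : Fin m ⊕ Fin m, ∑ v : Fin m ⊕ Fin m, ceD3 (fun p q r => φ ![p, q, r]) ⁅SH u, SH v⁆ (SA v) (SA u) x) := by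
    have swap1 : (∑ s : Fin m ⊕ Fin m, ∑ u : Fin m ⊕ Fin m, ∑ v : Fin m ⊕ Fin m,
          ω ![⁅SH u, SH v⁆, SA s] * ceD3 (fun p q r => φ ![p, q, r]) (SA v) (SA u) (SH s) x)
        = ∑ u : Fin m ⊕ Fin m, ∑ s : Fin m ⊕ Fin m, ∑ v : Fin m ⊕ Fin m,
          ω ![⁅SH u, SH v⁆, SA s] * ceD3 (fun p q r => φ ![p, q, r]) (SA v) (SA u) (SH s) x :=
      Finset.sum_comm
    have swap2 : (∑ u : Fin m ⊕ Fin m, ∑ s : Fin m ⊕ Fin m, ∑ v : Fin m ⊕ Fin m,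
          ω ![⁅SH u, SH v⁆, SA s] * ceD3 (fun p q r => φ ![p, q, r]) (SA v) (SA u) (SH s) x)
        = ∑ u : Fin m ⊕ Fin m, ∑ v : Fin m ⊕ Fin m, ∑ s : Fin m ⊕ Fin m,
          ω ![⁅SH u, SH v⁆, SA s] * ceD3 (fun p q r => φ ![p, q, r]) (SA v) (SA u) (SH s) x :=
      Finset.sum_congr rfl fun u _ => Finset.sum_comm
    rw [swap1, swap2, ← Finset.sum_neg_distrib]
    refine Finset.sum_congr rfl fun u _ => ?_
    rw [← Finset.sum_neg_distrib]
    refine Finset.sum_congr rfl fun v _ => ?_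
    have hc := C3 (fun y => ceD3 (fun p q r => φ ![p, q, r]) (SA v) (SA u) y x)
      (fun p q => g_add3 φ (SA v) (SA u) p q x) (fun c p => g_smul3 φ c (SA v) (SA u) p x)
      ⁅SH u, SH v⁆
    rw [hc, gcyc φ (SA v) (SA u) ⁅SH u, SH v⁆ x]
  have e2 : (∑ s : Fin m ⊕ Fin m, ∑ u : Fin m ⊕ Fin m, ceD3 (fun p q r => φ ![p, q, r]) ⁅SA s, SH u⁆ (SA u) (SH s) x)
      = (∑ s : Fin m ⊕ Fin m, ∑ u : Fin m ⊕ Fin m, ∑ v : Fin m ⊕ Fin m,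
          ω ![⁅SA s, SH v⁆, SH u] * ceD3 (fun p q r => φ ![p, q, r]) (SA v) (SA u) (SH s) x)
        - (∑ s : Fin m ⊕ Fin m, ∑ u : Fin m ⊕ Fin m, ∑ v : Fin m ⊕ Fin m,
          ω ![⁅SH u, SH v⁆, SA s] * ceD3 (fun p q r => φ ![p, q, r]) (SA v) (SA u) (SH s) x) := by
    rw [e1]; simp only [Finset.sum_sub_distrib]
  linarith [e2, hP1, hP2, hU]

private lemma chainR (x : 𝔤) (SA SH : Fin m ⊕ Fin m → 𝔤)
    (hclosed : ∀ x y z : 𝔤,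
      -ω ![⁅x, y⁆, z] + ω ![⁅x, z⁆, y] - ω ![⁅y, z⁆, x] = 0)
    (C1 : ∀ f : 𝔤 → ℝ, (∀ p q : 𝔤, f (p + q) = f p + f q) →
      (∀ (c : ℝ) (p : 𝔤), f (c • p) = c * f p) →
      ∀ u : 𝔤, ∑ s : Fin m ⊕ Fin m, ω ![u, SH s] * f (SA s) = f u)
    (C3 : ∀ f : 𝔤 → ℝ, (∀ p q : 𝔤, f (p + q) = f p + f q) →
      (∀ (c : ℝ) (p : 𝔤), f (c • p) = c * f p) →
      ∀ u : 𝔤, ∑ s : Fin m ⊕ Fin m, ω ![u, SA s] * f (SH s) = -f u) :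
    (∑ s : Fin m ⊕ Fin m, ∑ t : Fin m ⊕ Fin m, ceD3 (fun p q r => φ ![p, q, r]) ⁅SA s, SA t⁆ (SH s) (SH t) x) = 0 := by
  have hcl : ∀ P Q R : 𝔤, ω ![⁅P, Q⁆, R] = ω ![⁅P, R⁆, Q] - ω ![⁅Q, R⁆, P] :=
    fun P Q R => by linarith [hclosed P Q R]
  have hexp : ∀ C y z : 𝔤, ceD3 (fun p q r => φ ![p, q, r]) C y z x = ∑ s : Fin m ⊕ Fin m, ω ![C, SH s] * ceD3 (fun p q r => φ ![p, q, r]) (SA s) y z x :=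
    fun C y z => (C1 (fun w => ceD3 (fun p q r => φ ![p, q, r]) w y z x)
      (fun p q => g_add1 φ p q y z x) (fun c p => g_smul1 φ c p y z x) C).symm
  have hT := chainT ω φ x SA SH hclosed C1 C3
  have e1 : (∑ s : Fin m ⊕ Fin m, ∑ t : Fin m ⊕ Fin m, ceD3 (fun p q r => φ ![p, q, r]) ⁅SA s, SA t⁆ (SH s) (SH t) x)
      = (∑ s : Fin m ⊕ Fin m, ∑ t : Fin m ⊕ Fin m, ∑ u : Fin m ⊕ Fin m,
          (ω ![⁅SA s, SH u⁆, SA t] * ceD3 (fun p q r => φ ![p, q, r]) (SA u) (SH s) (SH t) x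
            - ω ![⁅SA t, SH u⁆, SA s] * ceD3 (fun p q r => φ ![p, q, r]) (SA u) (SH s) (SH t) x)) := by
    refine Finset.sum_congr rfl fun s _ => Finset.sum_congr rfl fun t _ => ?_
    rw [hexp ⁅SA s, SA t⁆ (SH s) (SH t)]
    refine Finset.sum_congr rfl fun u _ => ?_
    rw [hcl (SA s) (SA t) (SH u)]; ring
  have hP2 : (∑ s : Fin m ⊕ Fin m, ∑ t : Fin m ⊕ Fin m, ∑ u : Fin m ⊕ Fin m,
        ω ![⁅SA t, SH u⁆, SA s] * ceD3 (fun p q r => φ ![p, q, r]) (SA u) (SH s) (SH t) x)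
      = -(∑ s : Fin m ⊕ Fin m, ∑ t : Fin m ⊕ Fin m, ∑ u : Fin m ⊕ Fin m,
        ω ![⁅SA s, SH u⁆, SA t] * ceD3 (fun p q r => φ ![p, q, r]) (SA u) (SH s) (SH t) x) := by
    rw [Finset.sum_comm]
    rw [← Finset.sum_neg_distrib]
    refine Finset.sum_congr rfl fun s _ => ?_
    rw [← Finset.sum_neg_distrib]
    refine Finset.sum_congr rfl fun t _ => ?_
    rw [← Finset.sum_neg_distrib]
    refine Finset.sum_congr rfl fun u _ => ?_
    rw [gsw23 φ (SA u) (SH s) (SH t) x]; ring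
  have hP1 : (∑ s : Fin m ⊕ Fin m, ∑ t : Fin m ⊕ Fin m, ∑ u : Fin m ⊕ Fin m,
        ω ![⁅SA s, SH u⁆, SA t] * ceD3 (fun p q r => φ ![p, q, r]) (SA u) (SH s) (SH t) x)
      = -(∑ s : Fin m ⊕ Fin m, ∑ u : Fin m ⊕ Fin m, ceD3 (fun p q r => φ ![p, q, r]) ⁅SA s, SH u⁆ (SA u) (SH s) x) := by
    have swap1 : (∑ s : Fin m ⊕ Fin m, ∑ t : Fin m ⊕ Fin m, ∑ u : Fin m ⊕ Fin m,
          ω ![⁅SA s, SH u⁆, SA t] * ceD3 (fun p q r => φ ![p, q, r]) (SA u) (SH s) (SH t) x)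
        = ∑ s : Fin m ⊕ Fin m, ∑ u : Fin m ⊕ Fin m, ∑ t : Fin m ⊕ Fin m,
          ω ![⁅SA s, SH u⁆, SA t] * ceD3 (fun p q r => φ ![p, q, r]) (SA u) (SH s) (SH t) x :=
      Finset.sum_congr rfl fun s _ => Finset.sum_comm
    rw [swap1, ← Finset.sum_neg_distrib]
    refine Finset.sum_congr rfl fun s _ => ?_
    rw [← Finset.sum_neg_distrib]
    refine Finset.sum_congr rfl fun u _ => ?_
    have hc := C3 (fun y => ceD3 (fun p q r => φ ![p, q, r]) (SA u) (SH s) y x)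
      (fun p q => g_add3 φ (SA u) (SH s) p q x) (fun c p => g_smul3 φ c (SA u) (SH s) p x)
      ⁅SA s, SH u⁆
    rw [hc, gcyc φ (SA u) (SH s) ⁅SA s, SH u⁆ x]
  have e2 : (∑ s : Fin m ⊕ Fin m, ∑ t : Fin m ⊕ Fin m, ceD3 (fun p q r => φ ![p, q, r]) ⁅SA s, SA t⁆ (SH s) (SH t) x)
      = (∑ s : Fin m ⊕ Fin m, ∑ t : Fin m ⊕ Fin m, ∑ u : Fin m ⊕ Fin m,
          ω ![⁅SA s, SH u⁆, SA t] * ceD3 (fun p q r => φ ![p, q, r]) (SA u) (SH s) (SH t) x)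
        - (∑ s : Fin m ⊕ Fin m, ∑ t : Fin m ⊕ Fin m, ∑ u : Fin m ⊕ Fin m,
          ω ![⁅SA t, SH u⁆, SA s] * ceD3 (fun p q r => φ ![p, q, r]) (SA u) (SH s) (SH t) x) := by
    rw [e1]; simp only [Finset.sum_sub_distrib]
  linarith [e2, hP1, hP2, hT]

end Chain

/- ============ the theorem ============ -/

/-- On a symplectic Lie algebra `(𝔤, ω)` of dimension `2m` (presented by a Darboux basis
in which `ω` is standard and `d`-closed), for any invariant 1-form `α` one has
`dΛ_ωd(ω ∧ α) = 0`; consequently `dΛ_ωd` applied to any 3-form has image contained in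
the primitive part (its contraction with `ω` vanishes). -/
theorem stmt_4 (𝔤 : Type*) [LieRing 𝔤] [LieAlgebra ℝ 𝔤] (m : ℕ) (hm : 3 ≤ m)
    (e : Module.Basis (Fin m ⊕ Fin m) ℝ 𝔤)
    (ω : 𝔤 [⋀^Fin 2]→ₗ[ℝ] ℝ)
    (hD1 : ∀ i j, ω ![e (Sum.inl i), e (Sum.inr j)] = if i = j then 1 else 0)
    (hD2 : ∀ i j, ω ![e (Sum.inl i), e (Sum.inl j)] = 0)
    (hD3 : ∀ i j, ω ![e (Sum.inr i), e (Sum.inr j)] = 0)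
    (hclosed : ∀ x y z : 𝔤,
      -ω ![⁅x, y⁆, z] + ω ![⁅x, z⁆, y] - ω ![⁅y, z⁆, x] = 0)
    (α : 𝔤 →ₗ[ℝ] ℝ) :
    (∀ x y z : 𝔤,
      ceD2 (lefschetzContract e (ceD3 (wedgeTwoOne ω α))) x y z = 0) ∧
    (∀ φ : 𝔤 [⋀^Fin 3]→ₗ[ℝ] ℝ, ∀ x : 𝔤,
      ∑ i : Fin m,
        ceD2 (lefschetzContract e (ceD3 (fun p q r => φ ![p, q, r])))
          (e (Sum.inl i)) (e (Sum.inr i)) x = 0) := by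
  constructor
  · -- Part 1
    have hF : ∀ X Y : 𝔤, lefschetzContract e (ceD3 (wedgeTwoOne ω α)) X Y
        = -((∑ i : Fin m, α ⁅e (Sum.inl i), e (Sum.inr i)⁆) * ω ![X, Y])
          + 2 * α ⁅X, Y⁆ - (m : ℝ) * α ⁅X, Y⁆ := by
      intro X Y
      show (∑ i : Fin m, ceD3 (wedgeTwoOne ω α) (e (Sum.inl i)) (e (Sum.inr i)) X Y) = _
      have h1 : ∀ i : Fin m, ceD3 (wedgeTwoOne ω α) (e (Sum.inl i)) (e (Sum.inr i)) X Y
          = (-(ω ![X, Y] * α ⁅e (Sum.inl i), e (Sum.inr i)⁆) - α ⁅X, Y⁆)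
            + (-(ω ![Y, e (Sum.inr i)] * α ⁅e (Sum.inl i), X⁆
                + ω ![e (Sum.inl i), Y] * α ⁅e (Sum.inr i), X⁆))
            + (ω ![X, e (Sum.inr i)] * α ⁅e (Sum.inl i), Y⁆
                + ω ![e (Sum.inl i), X] * α ⁅e (Sum.inr i), Y⁆) := by
        intro i
        rw [keyP1 ω α hclosed _ _ X Y]
        rw [om_sw ω Y (e (Sum.inr i)), om_sw ω X (e (Sum.inr i)),
          show ω ![e (Sum.inl i), e (Sum.inr i)] = 1 from by rw [hD1]; simp]
        ring
      rw [Finset.sum_congr rfl fun i _ => h1 i]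
      rw [Finset.sum_add_distrib, Finset.sum_add_distrib]
      have hA : ∑ i : Fin m, (-(ω ![X, Y] * α ⁅e (Sum.inl i), e (Sum.inr i)⁆) - α ⁅X, Y⁆)
          = -((∑ i : Fin m, α ⁅e (Sum.inl i), e (Sum.inr i)⁆) * ω ![X, Y])
            - (m : ℝ) * α ⁅X, Y⁆ := by
        rw [Finset.sum_sub_distrib, Finset.sum_neg_distrib, ← Finset.mul_sum,
          Finset.sum_const, Finset.card_univ, Fintype.card_fin, nsmul_eq_mul]
        ring
      have hB : ∑ i : Fin m, (-(ω ![Y, e (Sum.inr i)] * α ⁅e (Sum.inl i), X⁆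
            + ω ![e (Sum.inl i), Y] * α ⁅e (Sum.inr i), X⁆)) = α ⁅X, Y⁆ := by
        rw [Finset.sum_neg_distrib]
        have key := repro ω e hD1 hD2 hD3 (adApply α X) Y
        simp only [adApply_apply] at key
        rw [key, show (⁅Y, X⁆ : 𝔤) = -⁅X, Y⁆ from by rw [← lie_skew], map_neg, neg_neg]
      have hC : ∑ i : Fin m, (ω ![X, e (Sum.inr i)] * α ⁅e (Sum.inl i), Y⁆
            + ω ![e (Sum.inl i), X] * α ⁅e (Sum.inr i), Y⁆) = α ⁅X, Y⁆ := by
        have key := repro ω e hD1 hD2 hD3 (adApply α Y) X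
        simp only [adApply_apply] at key
        exact key
      rw [hA, hB, hC]
      ring
    intro x y z
    show -(lefschetzContract e (ceD3 (wedgeTwoOne ω α)) ⁅x, y⁆ z)
        + lefschetzContract e (ceD3 (wedgeTwoOne ω α)) ⁅x, z⁆ y
        - lefschetzContract e (ceD3 (wedgeTwoOne ω α)) ⁅y, z⁆ x = 0
    rw [hF, hF, hF]
    have hv : (⁅⁅x, y⁆, z⁆ : 𝔤) - ⁅⁅x, z⁆, y⁆ + ⁅⁅y, z⁆, x⁆ = 0 := by
      rw [lie_lie, show (⁅⁅x, z⁆, y⁆ : 𝔤) = -⁅y, ⁅x, z⁆⁆ from (lie_skew _ _).symm,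
        show (⁅⁅y, z⁆, x⁆ : 𝔤) = -⁅x, ⁅y, z⁆⁆ from (lie_skew _ _).symm]
      abel
    have hα : α ⁅⁅x, y⁆, z⁆ - α ⁅⁅x, z⁆, y⁆ + α ⁅⁅y, z⁆, x⁆ = 0 := by
      rw [← map_sub, ← map_add, hv, map_zero]
    linear_combination (-(∑ i : Fin m, α ⁅e (Sum.inl i), e (Sum.inr i)⁆)) * hclosed x y z
      + ((m : ℝ) - 2) * hα
  · -- Part 2
    intro φ x
    have C1 : ∀ f : 𝔤 → ℝ, (∀ p q : 𝔤, f (p + q) = f p + f q) →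
        (∀ (c : ℝ) (p : 𝔤), f (c • p) = c * f p) →
        ∀ u : 𝔤, ∑ s : Fin m ⊕ Fin m,
          ω ![u, (Sum.elim (fun i => e (Sum.inr i)) (fun i => -e (Sum.inl i))) s] * f ((Sum.elim (fun i => e (Sum.inl i)) (fun i => e (Sum.inr i))) s) = f u := by
      intro f ha hs u
      rw [← contr1 ω e hD1 hD2 hD3 f ha hs u]
      refine Finset.sum_congr rfl fun s _ => ?_
      cases s <;> rfl
    have C3 : ∀ f : 𝔤 → ℝ, (∀ p q : 𝔤, f (p + q) = f p + f q) →
        (∀ (c : ℝ) (p : 𝔤), f (c • p) = c * f p) →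
        ∀ u : 𝔤, ∑ s : Fin m ⊕ Fin m,
          ω ![u, (Sum.elim (fun i => e (Sum.inl i)) (fun i => e (Sum.inr i))) s] * f ((Sum.elim (fun i => e (Sum.inr i)) (fun i => -e (Sum.inl i))) s) = -f u := by
      intro f ha hs u
      rw [← contr3 ω e hD1 hD2 hD3 f ha hs u]
      refine Finset.sum_congr rfl fun s _ => ?_
      cases s <;> rfl
    have hR := chainR ω φ x (Sum.elim (fun i => e (Sum.inl i)) (fun i => e (Sum.inr i))) (Sum.elim (fun i => e (Sum.inr i)) (fun i => -e (Sum.inl i))) hclosed C1 C3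
    have hGoal : (∑ i : Fin m, ceD2 (lefschetzContract e (ceD3 (fun p q r => φ ![p, q, r])))
          (e (Sum.inl i)) (e (Sum.inr i)) x)
        = ∑ i : Fin m, ∑ j : Fin m,
            (-(ceD3 (fun p q r => φ ![p, q, r]) (e (Sum.inl j)) (e (Sum.inr j)) ⁅e (Sum.inl i), e (Sum.inr i)⁆ x)
              + ceD3 (fun p q r => φ ![p, q, r]) (e (Sum.inl j)) (e (Sum.inr j)) ⁅e (Sum.inl i), x⁆ (e (Sum.inr i))
              - ceD3 (fun p q r => φ ![p, q, r]) (e (Sum.inl j)) (e (Sum.inr j)) ⁅e (Sum.inr i), x⁆ (e (Sum.inl i))) := by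
      refine Finset.sum_congr rfl fun i _ => ?_
      show -(∑ j : Fin m, ceD3 (fun p q r => φ ![p, q, r]) (e (Sum.inl j)) (e (Sum.inr j)) ⁅e (Sum.inl i), e (Sum.inr i)⁆ x)
          + (∑ j : Fin m, ceD3 (fun p q r => φ ![p, q, r]) (e (Sum.inl j)) (e (Sum.inr j)) ⁅e (Sum.inl i), x⁆ (e (Sum.inr i)))
          - (∑ j : Fin m, ceD3 (fun p q r => φ ![p, q, r]) (e (Sum.inl j)) (e (Sum.inr j)) ⁅e (Sum.inr i), x⁆ (e (Sum.inl i))) = _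
      rw [← Finset.sum_neg_distrib, ← Finset.sum_add_distrib, ← Finset.sum_sub_distrib]
    have hMsum : (∑ i : Fin m, ∑ j : Fin m,
        ((-(ceD3 (fun p q r => φ ![p, q, r]) (e (Sum.inl j)) (e (Sum.inr j)) ⁅e (Sum.inl i), e (Sum.inr i)⁆ x)
            + ceD3 (fun p q r => φ ![p, q, r]) (e (Sum.inl j)) (e (Sum.inr j)) ⁅e (Sum.inl i), x⁆ (e (Sum.inr i))
            - ceD3 (fun p q r => φ ![p, q, r]) (e (Sum.inl j)) (e (Sum.inr j)) ⁅e (Sum.inr i), x⁆ (e (Sum.inl i)))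
          + (-(ceD3 (fun p q r => φ ![p, q, r]) (e (Sum.inl i)) (e (Sum.inr i)) ⁅e (Sum.inl j), e (Sum.inr j)⁆ x)
            + ceD3 (fun p q r => φ ![p, q, r]) (e (Sum.inl i)) (e (Sum.inr i)) ⁅e (Sum.inl j), x⁆ (e (Sum.inr j))
            - ceD3 (fun p q r => φ ![p, q, r]) (e (Sum.inl i)) (e (Sum.inr i)) ⁅e (Sum.inr j), x⁆ (e (Sum.inl j)))
          + (ceD3 (fun p q r => φ ![p, q, r]) ⁅e (Sum.inl i), e (Sum.inl j)⁆ (e (Sum.inr i)) (e (Sum.inr j)) x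
            - ceD3 (fun p q r => φ ![p, q, r]) ⁅e (Sum.inl i), e (Sum.inr j)⁆ (e (Sum.inr i)) (e (Sum.inl j)) x
            - ceD3 (fun p q r => φ ![p, q, r]) ⁅e (Sum.inr i), e (Sum.inl j)⁆ (e (Sum.inl i)) (e (Sum.inr j)) x
            + ceD3 (fun p q r => φ ![p, q, r]) ⁅e (Sum.inr i), e (Sum.inr j)⁆ (e (Sum.inl i)) (e (Sum.inl j)) x))) = 0 :=
      Finset.sum_eq_zero fun i _ => Finset.sum_eq_zero fun j _ =>
        masterM φ (e (Sum.inl i)) (e (Sum.inr i)) (e (Sum.inl j)) (e (Sum.inr j)) x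
    have hc1 : (∑ i : Fin m, ∑ j : Fin m, ceD3 (fun p q r => φ ![p, q, r]) (e (Sum.inl i)) (e (Sum.inr i)) ⁅e (Sum.inl j), e (Sum.inr j)⁆ x)
        = ∑ i : Fin m, ∑ j : Fin m, ceD3 (fun p q r => φ ![p, q, r]) (e (Sum.inl j)) (e (Sum.inr j)) ⁅e (Sum.inl i), e (Sum.inr i)⁆ x :=
      Finset.sum_comm
    have hc2 : (∑ i : Fin m, ∑ j : Fin m, ceD3 (fun p q r => φ ![p, q, r]) (e (Sum.inl i)) (e (Sum.inr i)) ⁅e (Sum.inl j), x⁆ (e (Sum.inr j)))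
        = ∑ i : Fin m, ∑ j : Fin m, ceD3 (fun p q r => φ ![p, q, r]) (e (Sum.inl j)) (e (Sum.inr j)) ⁅e (Sum.inl i), x⁆ (e (Sum.inr i)) :=
      Finset.sum_comm
    have hc3 : (∑ i : Fin m, ∑ j : Fin m, ceD3 (fun p q r => φ ![p, q, r]) (e (Sum.inl i)) (e (Sum.inr i)) ⁅e (Sum.inr j), x⁆ (e (Sum.inl j)))
        = ∑ i : Fin m, ∑ j : Fin m, ceD3 (fun p q r => φ ![p, q, r]) (e (Sum.inl j)) (e (Sum.inr j)) ⁅e (Sum.inr i), x⁆ (e (Sum.inl i)) :=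
      Finset.sum_comm
    have hRsplit : (∑ s : Fin m ⊕ Fin m, ∑ t : Fin m ⊕ Fin m,
          ceD3 (fun p q r => φ ![p, q, r]) ⁅(Sum.elim (fun i => e (Sum.inl i)) (fun i => e (Sum.inr i))) s, (Sum.elim (fun i => e (Sum.inl i)) (fun i => e (Sum.inr i))) t⁆ ((Sum.elim (fun i => e (Sum.inr i)) (fun i => -e (Sum.inl i))) s) ((Sum.elim (fun i => e (Sum.inr i)) (fun i => -e (Sum.inl i))) t) x)
        = (∑ i : Fin m, ∑ j : Fin m, ceD3 (fun p q r => φ ![p, q, r]) ⁅e (Sum.inl i), e (Sum.inl j)⁆ (e (Sum.inr i)) (e (Sum.inr j)) x)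
          - (∑ i : Fin m, ∑ j : Fin m, ceD3 (fun p q r => φ ![p, q, r]) ⁅e (Sum.inl i), e (Sum.inr j)⁆ (e (Sum.inr i)) (e (Sum.inl j)) x)
          - (∑ i : Fin m, ∑ j : Fin m, ceD3 (fun p q r => φ ![p, q, r]) ⁅e (Sum.inr i), e (Sum.inl j)⁆ (e (Sum.inl i)) (e (Sum.inr j)) x)
          + (∑ i : Fin m, ∑ j : Fin m, ceD3 (fun p q r => φ ![p, q, r]) ⁅e (Sum.inr i), e (Sum.inr j)⁆ (e (Sum.inl i)) (e (Sum.inl j)) x) := by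
      simp only [Fintype.sum_sum_type, Sum.elim_inl, Sum.elim_inr, g_neg2, g_neg3, neg_neg,
        Finset.sum_neg_distrib, Finset.sum_add_distrib, Finset.sum_sub_distrib]
      ring
    simp only [Finset.sum_add_distrib, Finset.sum_sub_distrib, Finset.sum_neg_distrib]
      at hMsum hGoal
    linarith [hGoal, hMsum, hc1, hc2, hc3, hR, hRsplit]

end
end

section
/- Let A,C,E,G,M,N,S,T be real numbers satisfying the system A(4CE−(M−N)²+(S−T)²)=0, C(4AG+(M+N)²−(S+T)²)=0, E(4AG+(M+N)²−(S+T)²)=0, G(4CE−(M−N)²+(S−T)²)=0. Then the quantity Q/4 := [4AG+(M+N)²−(S+T)²][4CE−(M−N)²+(S−T)²] + (M²−N²−S²+T²)² is nonnegative; moreover if additionally A=C=E=G=0 then Q/4 = 4(MT−NS)² + (M²−N²−S²+T²)² − (M²−N²−S²+T²)² + 4(MT−NS)² ≥ 0, i.e. in all cases Q ≥ 0. -/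
/-- The algebraic core of "F-harmonic closed invariant 3-forms on the solvable Lie
algebra (−e¹⁵,e²⁵,−e³⁶,e⁴⁶,0,0) have Q(φ) ≥ 0": given the F-harmonicity system, the
quantity Q/4 is nonnegative, and when A=C=E=G=0 it equals 4(MT−NS)². -/
theorem stmt_13 (A C E G M N S T : ℝ)
    (h1 : A * (4 * C * E - (M - N) ^ 2 + (S - T) ^ 2) = 0)
    (h2 : C * (4 * A * G + (M + N) ^ 2 - (S + T) ^ 2) = 0)
    (h3 : E * (4 * A * G + (M + N) ^ 2 - (S + T) ^ 2) = 0)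
    (h4 : G * (4 * C * E - (M - N) ^ 2 + (S - T) ^ 2) = 0) :
    0 ≤ (4 * A * G + (M + N) ^ 2 - (S + T) ^ 2) *
          (4 * C * E - (M - N) ^ 2 + (S - T) ^ 2) +
        (M ^ 2 - N ^ 2 - S ^ 2 + T ^ 2) ^ 2 ∧
      (A = 0 → C = 0 → E = 0 → G = 0 →
        (4 * A * G + (M + N) ^ 2 - (S + T) ^ 2) *
            (4 * C * E - (M - N) ^ 2 + (S - T) ^ 2) +
          (M ^ 2 - N ^ 2 - S ^ 2 + T ^ 2) ^ 2 = 4 * (M * T - N * S) ^ 2) := by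
  constructor
  · by_cases hP : 4 * A * G + (M + N) ^ 2 - (S + T) ^ 2 = 0
    · rw [hP, zero_mul, zero_add]; positivity
    · by_cases hQ : 4 * C * E - (M - N) ^ 2 + (S - T) ^ 2 = 0
      · rw [hQ]; nlinarith [sq_nonneg (M ^ 2 - N ^ 2 - S ^ 2 + T ^ 2)]
      · have hA : A = 0 := by rcases mul_eq_zero.1 h1 with h | h; exact h; exact absurd h hQ
        have hC : C = 0 := by rcases mul_eq_zero.1 h2 with h | h; exact h; exact absurd h hP
        have hE : E = 0 := by rcases mul_eq_zero.1 h3 with h | h; exact h; exact absurd h hP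
        have hG : G = 0 := by rcases mul_eq_zero.1 h4 with h | h; exact h; exact absurd h hQ
        subst hA hC hE hG
        nlinarith [sq_nonneg (M * T - N * S)]
  · rintro rfl rfl rfl rfl
    ring
end

section
/- Let λ,S > 0 and suppose u,v : [0,T) → ℝ solve ∂ₜu = 2λ²u(v−S), ∂ₜv = 2λ²v(u−S). Then u − v = C₀e^{−2λ²St} with C₀ = u(0)−v(0), and setting w = e^{2λ²St}u, the quantity w solves ∂ₜw = 2λ²e^{−2λ²St}w(w−C₀); consequently, if u(0) > v(0) > S > 0, then w blows up at the finite time T' = −(1/(2λ²S)) log[1 + (S/C₀) log((w₀−C₀)/w₀)], where w₀ = u(0). -/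
lemma my_const (f : ℝ → ℝ) (t : ℝ) (ht : 0 ≤ t)
    (hf : ∀ s ∈ Set.Icc (0:ℝ) t, HasDerivAt f 0 s) : f t = f 0 := by
  have hcont : ContinuousOn f (Set.Icc 0 t) := fun s hs => (hf s hs).continuousAt.continuousWithinAt
  exact constant_of_has_deriv_right_zero hcont
    (fun x hx => ((hf x ⟨hx.1, hx.2.le⟩).hasDerivWithinAt)) t ⟨ht, le_rfl⟩

lemma my_vpos (lam S T : ℝ) (u v : ℝ → ℝ)
    (hu : ∀ t ∈ Set.Ico (0 : ℝ) T, HasDerivAt u (2 * lam ^ 2 * u t * (v t - S)) t)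
    (hv : ∀ t ∈ Set.Ico (0 : ℝ) T, HasDerivAt v (2 * lam ^ 2 * v t * (u t - S)) t)
    (hv0 : 0 < v 0) : ∀ s ∈ Set.Ico (0:ℝ) T, 0 < v s := by
  intro s₁ hs₁
  have hsub : Set.Icc (0:ℝ) s₁ ⊆ Set.Ico 0 T := fun x hx => ⟨hx.1, lt_of_le_of_lt hx.2 hs₁.2⟩
  set φ : ℝ → ℝ := fun x => max 0 (min x s₁) with hφdef
  have hφcont : Continuous φ := continuous_const.max (continuous_id.min continuous_const)
  have hφmem : ∀ x, φ x ∈ Set.Icc (0:ℝ) s₁ := by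
    intro x
    exact ⟨le_max_left _ _, max_le hs₁.1 (min_le_right _ _)⟩
  have hucont : ContinuousOn u (Set.Icc 0 s₁) := fun x hx =>
    (hu x (hsub hx)).continuousAt.continuousWithinAt
  set a : ℝ → ℝ := fun x => 2 * lam ^ 2 * (u (φ x) - S) with hadef
  have hacont : Continuous a := by
    apply continuous_const.mul (Continuous.sub _ continuous_const)
    exact hucont.comp_continuous hφcont hφmem
  set A : ℝ → ℝ := fun x => ∫ y in (0:ℝ)..x, a y with hAdef
  have hA : ∀ x, HasDerivAt A (a x) x := fun x =>
    (hacont.integral_hasStrictDerivAt 0 x).hasDerivAt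
  set h : ℝ → ℝ := fun x => v x * Real.exp (-(A x)) with hhdef
  have hkey : h s₁ = h 0 := by
    apply my_const h s₁ hs₁.1
    intro x hx
    have hφx : φ x = x := by
      rw [hφdef]; simp only [min_eq_left hx.2, max_eq_right hx.1]
    have hd : HasDerivAt h (2 * lam ^ 2 * v x * (u x - S) * Real.exp (-(A x)) +
        v x * (Real.exp (-(A x)) * (-(a x)))) x :=
      (hv x (hsub hx)).mul ((hA x).neg.exp)
    convert hd using 1
    rw [hadef]; simp only [hφx]; ring
  have hh0 : h 0 = v 0 := by
    rw [hhdef]; simp [hAdef]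
  have hpos : 0 < h s₁ := by rw [hkey, hh0]; exact hv0
  simp only [hhdef] at hpos
  have he := Real.exp_pos (-(A s₁))
  nlinarith [he, hpos]

/-- The explicitly solvable comparison ODE system `∂ₜu = 2λ²u(v−S)`, `∂ₜv = 2λ²v(u−S)`:
the difference `u − v` decays exponentially, `w = e^{2λ²St}u` solves the stated
Bernoulli-type ODE, and under the initial conditions `u(0) > v(0) > S > 0` the solution
cannot exist beyond the explicit blow-up time `T'`. -/
theorem stmt_15 (lam S T : ℝ) (hlam : 0 < lam) (hS : 0 < S) (u v : ℝ → ℝ)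
    (hu : ∀ t ∈ Set.Ico (0 : ℝ) T, HasDerivAt u (2 * lam ^ 2 * u t * (v t - S)) t)
    (hv : ∀ t ∈ Set.Ico (0 : ℝ) T, HasDerivAt v (2 * lam ^ 2 * v t * (u t - S)) t) :
    (∀ t ∈ Set.Ico (0 : ℝ) T,
      u t - v t = (u 0 - v 0) * Real.exp (-2 * lam ^ 2 * S * t)) ∧
    (∀ t ∈ Set.Ico (0 : ℝ) T,
      HasDerivAt (fun s => Real.exp (2 * lam ^ 2 * S * s) * u s)
        (2 * lam ^ 2 * Real.exp (-2 * lam ^ 2 * S * t) *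
          (Real.exp (2 * lam ^ 2 * S * t) * u t) *
          (Real.exp (2 * lam ^ 2 * S * t) * u t - (u 0 - v 0))) t) ∧
    (S < v 0 → v 0 < u 0 →
      T ≤ -(1 / (2 * lam ^ 2 * S)) *
        Real.log (1 + (S / (u 0 - v 0)) * Real.log ((u 0 - (u 0 - v 0)) / u 0))) := by
  have hexp : ∀ (d x : ℝ), HasDerivAt (fun s => Real.exp (d * s)) (Real.exp (d * x) * d) x :=
    fun d x => by simpa using ((hasDerivAt_id x).const_mul d).exp
  have key : ∀ t ∈ Set.Ico (0:ℝ) T,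
      (u t - v t) * Real.exp (2 * lam ^ 2 * S * t) = u 0 - v 0 := by
    intro t ht
    have hsub : Set.Icc (0:ℝ) t ⊆ Set.Ico 0 T := fun x hx => ⟨hx.1, lt_of_le_of_lt hx.2 ht.2⟩
    have := my_const (fun s => (u s - v s) * Real.exp (2 * lam ^ 2 * S * s)) t ht.1 ?_
    · simpa using this
    · intro s hs
      have hd : HasDerivAt (fun s => (u s - v s) * Real.exp (2 * lam ^ 2 * S * s))
          ((2 * lam ^ 2 * u s * (v s - S) - 2 * lam ^ 2 * v s * (u s - S)) *
              Real.exp (2 * lam ^ 2 * S * s)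
            + (u s - v s) * (Real.exp (2 * lam ^ 2 * S * s) * (2 * lam ^ 2 * S))) s :=
        ((hu s (hsub hs)).sub (hv s (hsub hs))).mul (hexp (2 * lam ^ 2 * S) s)
      convert hd using 1
      ring
  have hEE : ∀ t : ℝ, Real.exp (-2 * lam ^ 2 * S * t) * Real.exp (2 * lam ^ 2 * S * t) = 1 := by
    intro t
    rw [← Real.exp_add]
    norm_num
  have part1 : ∀ t ∈ Set.Ico (0:ℝ) T,
      u t - v t = (u 0 - v 0) * Real.exp (-2 * lam ^ 2 * S * t) := by
    intro t ht
    have hk := key t ht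
    have h2 := hEE t
    linear_combination Real.exp (-2 * lam ^ 2 * S * t) * hk - (u t - v t) * h2
  refine ⟨part1, ?_, ?_⟩
  · -- part 2
    intro t ht
    have hd : HasDerivAt (fun s => Real.exp (2 * lam ^ 2 * S * s) * u s)
        (Real.exp (2 * lam ^ 2 * S * t) * (2 * lam ^ 2 * S) * u t
          + Real.exp (2 * lam ^ 2 * S * t) * (2 * lam ^ 2 * u t * (v t - S))) t :=
      (hexp (2 * lam ^ 2 * S) t).mul (hu t ht)
    convert hd using 1
    have hk := key t ht
    have h2 := hEE t
    linear_combination (2 * lam ^ 2 * Real.exp (-2 * lam ^ 2 * S * t) *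
        Real.exp (2 * lam ^ 2 * S * t) * u t) * hk +
      (2 * lam ^ 2 * Real.exp (2 * lam ^ 2 * S * t) * u t * v t) * h2
  · -- part 3
    intro hSv huv
    rw [sub_sub_cancel]
    have hC : 0 < u 0 - v 0 := by linarith
    have hv0pos : 0 < v 0 := lt_trans hS hSv
    have hu0pos : 0 < u 0 := by linarith
    have hlog1 : Real.log (u 0 / v 0) < (u 0 - v 0) / S := by
      have h1 : Real.log (u 0 / v 0) < u 0 / v 0 - 1 :=
        Real.log_lt_sub_one_of_pos (by positivity) (ne_of_gt ((one_lt_div hv0pos).mpr huv))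
      have h2 : u 0 / v 0 - 1 = (u 0 - v 0) / v 0 := by field_simp
      have h3 : (u 0 - v 0) / v 0 < (u 0 - v 0) / S := by
        apply div_lt_div_of_pos_left hC hS hSv
      linarith
    have hlogneg : Real.log (v 0 / u 0) = - Real.log (u 0 / v 0) := by
      rw [← Real.log_inv, inv_div]
    have hApos : 0 < 1 + S / (u 0 - v 0) * Real.log (v 0 / u 0) := by
      rw [hlogneg]
      have h4 : S / (u 0 - v 0) * Real.log (u 0 / v 0) < S / (u 0 - v 0) * ((u 0 - v 0) / S) :=
        mul_lt_mul_of_pos_left hlog1 (by positivity)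
      have h5 : S / (u 0 - v 0) * ((u 0 - v 0) / S) = 1 := by field_simp
      rw [h5] at h4
      linarith
    have hAlt1 : 1 + S / (u 0 - v 0) * Real.log (v 0 / u 0) < 1 := by
      have hl : Real.log (v 0 / u 0) < 0 :=
        Real.log_neg (by positivity) ((div_lt_one hu0pos).mpr huv)
      nlinarith [div_pos hS hC]
    have hlogA : Real.log (1 + S / (u 0 - v 0) * Real.log (v 0 / u 0)) < 0 :=
      Real.log_neg hApos hAlt1
    set T' : ℝ := -(1 / (2 * lam ^ 2 * S)) *
      Real.log (1 + S / (u 0 - v 0) * Real.log (v 0 / u 0)) with hT'def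
    have hT'pos : 0 < T' := by
      rw [hT'def]
      have : 0 < 1 / (2 * lam ^ 2 * S) := by positivity
      nlinarith
    by_contra hcon
    push_neg at hcon
    set t : ℝ := (T' + T) / 2 with htdef
    have htT' : T' < t := by rw [htdef]; linarith
    have htT : t < T := by rw [htdef]; linarith
    have ht0 : 0 < t := lt_trans hT'pos htT'
    have htmem : t ∈ Set.Ico (0:ℝ) T := ⟨ht0.le, htT⟩
    have hsub : Set.Icc (0:ℝ) t ⊆ Set.Ico 0 T := fun x hx => ⟨hx.1, lt_of_le_of_lt hx.2 htT⟩
    have hvpos : ∀ s ∈ Set.Icc (0:ℝ) t, 0 < v s := fun s hs =>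
      my_vpos lam S T u v hu hv hv0pos s (hsub hs)
    have hvu : ∀ s ∈ Set.Icc (0:ℝ) t, v s < u s := by
      intro s hs
      have := part1 s (hsub hs)
      nlinarith [Real.exp_pos (-2 * lam ^ 2 * S * s)]
    have hupos : ∀ s ∈ Set.Icc (0:ℝ) t, 0 < u s := fun s hs =>
      lt_trans (hvpos s hs) (hvu s hs)
    -- the function D
    have hDt : (fun s => (Real.log (v s) - Real.log (u s)) -
        (u 0 - v 0) / S * (1 - Real.exp (-2 * lam ^ 2 * S * s))) t =
        (fun s => (Real.log (v s) - Real.log (u s)) -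
        (u 0 - v 0) / S * (1 - Real.exp (-2 * lam ^ 2 * S * s))) 0 := by
      refine my_const (fun s => (Real.log (v s) - Real.log (u s)) -
        (u 0 - v 0) / S * (1 - Real.exp (-2 * lam ^ 2 * S * s))) t ht0.le ?_
      intro s hs
      have hvs := hvpos s hs
      have hus := hupos s hs
      have hd : HasDerivAt (fun s => (Real.log (v s) - Real.log (u s)) -
          (u 0 - v 0) / S * (1 - Real.exp (-2 * lam ^ 2 * S * s)))
          ((2 * lam ^ 2 * v s * (u s - S) / v s - 2 * lam ^ 2 * u s * (v s - S) / u s) -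
            (u 0 - v 0) / S * (0 - Real.exp (-2 * lam ^ 2 * S * s) * (-2 * lam ^ 2 * S))) s := by
        exact (((hv s (hsub hs)).log (ne_of_gt hvs)).sub
            ((hu s (hsub hs)).log (ne_of_gt hus))).sub
          (((hasDerivAt_const s (1:ℝ)).sub (hexp (-2 * lam ^ 2 * S) s)).const_mul
            ((u 0 - v 0) / S))
      convert hd using 1
      have hp := part1 s (hsub hs)
      have e1 : ∀ (x y : ℝ), y ≠ 0 → 2 * lam ^ 2 * y * x / y = 2 * lam ^ 2 * x := by
        intro x y hy; field_simp
      rw [e1 (u s - S) (v s) (ne_of_gt hvs), e1 (v s - S) (u s) (ne_of_gt hus)]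
      have e2 : (u 0 - v 0) / S * (0 - Real.exp (-2 * lam ^ 2 * S * s) * (-2 * lam ^ 2 * S)) =
          2 * lam ^ 2 * (u 0 - v 0) * Real.exp (-2 * lam ^ 2 * S * s) := by
        field_simp
        ring
      rw [e2]
      linear_combination (-(2 * lam ^ 2)) * hp
    simp only at hDt
    rw [mul_zero, Real.exp_zero, sub_self, mul_zero, sub_zero] at hDt
    -- F t < 0
    have hFt : Real.log (v t) - Real.log (u t) < 0 := by
      have := Real.log_lt_log (hvpos t ⟨ht0.le, le_rfl⟩) (hvu t ⟨ht0.le, le_rfl⟩)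
      linarith
    -- exp(-c t) < A
    have hexplt : Real.exp (-2 * lam ^ 2 * S * t) <
        1 + S / (u 0 - v 0) * Real.log (v 0 / u 0) := by
      have h1 : -2 * lam ^ 2 * S * t < -2 * lam ^ 2 * S * T' := by
        have hcc : 0 < 2 * lam ^ 2 * S := by positivity
        nlinarith [mul_pos hcc (sub_pos.mpr htT')]
      have h2 : -2 * lam ^ 2 * S * T' =
          Real.log (1 + S / (u 0 - v 0) * Real.log (v 0 / u 0)) := by
        rw [hT'def]
        field_simp
      calc Real.exp (-2 * lam ^ 2 * S * t) < Real.exp (-2 * lam ^ 2 * S * T') :=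
            Real.exp_lt_exp.mpr h1
        _ = 1 + S / (u 0 - v 0) * Real.log (v 0 / u 0) := by rw [h2, Real.exp_log hApos]
    have hlogdiv : Real.log (v 0 / u 0) = Real.log (v 0) - Real.log (u 0) :=
      Real.log_div (ne_of_gt hv0pos) (ne_of_gt hu0pos)
    -- (C/S)(1-e) > -(log v0 - log u0)
    have hmain : (u 0 - v 0) / S * (1 - Real.exp (-2 * lam ^ 2 * S * t)) >
        -(Real.log (v 0) - Real.log (u 0)) := by
      have h6 : (u 0 - v 0) / S * (1 - (1 + S / (u 0 - v 0) * Real.log (v 0 / u 0))) =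
          -(Real.log (v 0) - Real.log (u 0)) := by
        rw [hlogdiv]; field_simp; ring
      have h7 : (u 0 - v 0) / S * (1 - Real.exp (-2 * lam ^ 2 * S * t)) >
          (u 0 - v 0) / S * (1 - (1 + S / (u 0 - v 0) * Real.log (v 0 / u 0))) := by
        apply mul_lt_mul_of_pos_left _ (by positivity)
        linarith
      linarith
    linarith [hDt, hFt, hmain]
end

section
/- Let λ > 0, let M,N be real constants, and let u,v : [0,T) → (0,∞) solve ∂ₜu = 2λ²u(v−(M−N)²), ∂ₜv = 2λ²v(u−(M+N)²), with the initial open conditions u,v > 0 and uv > u(M−N)² + v(M+N)² preserved along the flow. Then the maximal existence time T is finite. -/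
lemma mono_aux {A : ℝ} {f f' : ℝ → ℝ}
    (hf : ∀ t, A ≤ t → HasDerivAt f (f' t) t)
    (h0 : ∀ t, A ≤ t → 0 ≤ f' t) : MonotoneOn f (Set.Ici A) := by
  apply monotoneOn_of_deriv_nonneg (convex_Ici A)
  · exact fun t ht => (hf t ht).continuousAt.continuousWithinAt
  · rw [interior_Ici]
    exact fun t ht => (hf t (le_of_lt ht)).differentiableAt.differentiableWithinAt
  · rw [interior_Ici]
    intro t ht
    rw [(hf t (le_of_lt ht)).deriv]
    exact h0 t (le_of_lt ht)

/-- The reduced Type IIA flow ODE system `∂ₜu = 2λ²u(v−(M−N)²)`, `∂ₜv = 2λ²v(u−(M+N)²)`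
with the (preserved) open conditions `u,v > 0` and `uv > u(M−N)² + v(M+N)²` cannot have a
global-in-time solution: the maximal existence time is finite. -/
theorem stmt_16 (lam M N : ℝ) (hlam : 0 < lam) (u v : ℝ → ℝ)
    (hu : ∀ t : ℝ, 0 ≤ t →
      HasDerivAt u (2 * lam ^ 2 * u t * (v t - (M - N) ^ 2)) t)
    (hv : ∀ t : ℝ, 0 ≤ t →
      HasDerivAt v (2 * lam ^ 2 * v t * (u t - (M + N) ^ 2)) t)
    (hpos : ∀ t : ℝ, 0 ≤ t → 0 < u t ∧ 0 < v t ∧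
      u t * (M - N) ^ 2 + v t * (M + N) ^ 2 < u t * v t) :
    False := by
  set c : ℝ := 2 * lam ^ 2 with hc_def
  have hc : 0 < c := by positivity
  set a : ℝ := (M - N) ^ 2 with ha_def
  set b : ℝ := (M + N) ^ 2 with hb_def
  have ha : 0 ≤ a := sq_nonneg _
  have hb : 0 ≤ b := sq_nonneg _
  clear_value c a b
  clear hc_def ha_def hb_def
  set K : ℝ := a + b with hK_def
  clear_value K
  -- pointwise facts
  have hub : ∀ t, 0 ≤ t → b < u t := by
    intro t ht
    obtain ⟨h1, h2, h3⟩ := hpos t ht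
    nlinarith [mul_nonneg ha h1.le]
  have hva : ∀ t, 0 ≤ t → a < v t := by
    intro t ht
    obtain ⟨h1, h2, h3⟩ := hpos t ht
    nlinarith [mul_nonneg hb h2.le]
  have hyt : ∀ t, 0 ≤ t → 0 < u t + v t - K := by
    intro t ht; have := hub t ht; have := hva t ht; rw [hK_def]; linarith
  -- derivative of p = u*v
  have hp : ∀ t, 0 ≤ t →
      HasDerivAt (fun t => u t * v t) (c * (u t * v t) * (u t + v t - K)) t := by
    intro t ht
    have h := (hu t ht).mul (hv t ht)
    refine h.congr_deriv ?_
    rw [hK_def]; ring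
  -- derivative of s = u+v
  have hs : ∀ t, 0 ≤ t →
      HasDerivAt (fun t => u t + v t)
        (c * (2 * (u t * v t) - u t * a - v t * b)) t := by
    intro t ht
    have h := (hu t ht).add (hv t ht)
    refine h.congr_deriv ?_
    ring
  -- p is monotone, hence ≥ p0
  obtain ⟨p0, hp0_def⟩ : ∃ p0 : ℝ, p0 = u 0 * v 0 := ⟨_, rfl⟩
  have hp0 : 0 < p0 := by
    rw [hp0_def]; exact mul_pos (hpos 0 le_rfl).1 (hpos 0 le_rfl).2.1
  have hpmono : MonotoneOn (fun t => u t * v t) (Set.Ici 0) := by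
    apply mono_aux hp
    intro t ht
    have h1 := (hpos t ht).1
    have h2 := (hpos t ht).2.1
    have h3 := hyt t ht
    positivity
  have hpge : ∀ t, 0 ≤ t → p0 ≤ u t * v t := by
    intro t ht
    rw [hp0_def]
    exact hpmono (Set.self_mem_Ici) ht ht
  -- s(t) ≥ s(0) + c p0 t
  have hs2 : MonotoneOn (fun t => u t + v t - c * p0 * t) (Set.Ici 0) := by
    apply mono_aux (f' := fun t => c * (2 * (u t * v t) - u t * a - v t * b) - c * p0)
    · intro t ht
      have h1 := (hs t ht).sub ((hasDerivAt_id t).const_mul (c * p0))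
      refine h1.congr_deriv ?_
      ring
    · intro t ht
      have h3 := (hpos t ht).2.2
      have h4 := hpge t ht
      nlinarith
  have hsge : ∀ t, 0 ≤ t → u 0 + v 0 + c * p0 * t ≤ u t + v t := by
    intro t ht
    have h := hs2 (Set.self_mem_Ici) ht ht
    simp only at h
    linarith
  -- p ≥ y²/4 + C
  obtain ⟨C, hC_def⟩ : ∃ C : ℝ, C = p0 - (u 0 + v 0 - K) ^ 2 / 4 := ⟨_, rfl⟩
  have hs4 : MonotoneOn (fun t => u t * v t - (u t + v t - K) ^ 2 / 4) (Set.Ici 0) := by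
    apply mono_aux (f' := fun t => c * (u t * v t) * (u t + v t - K) -
      2 * (u t + v t - K) ^ 1 * (c * (2 * (u t * v t) - u t * a - v t * b)) / 4)
    · intro t ht
      have h1 := (hp t ht).sub ((((hs t ht).sub_const K).pow 2).div_const 4)
      refine h1.congr_deriv ?_
      norm_num
    · intro t ht
      have h1 := (hpos t ht).1
      have h2 := (hpos t ht).2.1
      have h3 := hyt t ht
      have hua : 0 ≤ u t * a := mul_nonneg h1.le ha
      have hvb : 0 ≤ v t * b := mul_nonneg h2.le hb
      nlinarith [mul_nonneg h3.le (mul_nonneg hc.le (add_nonneg hua hvb))]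
  have hpq : ∀ t, 0 ≤ t → (u t + v t - K) ^ 2 / 4 + C ≤ u t * v t := by
    intro t ht
    have h := hs4 (Set.self_mem_Ici) ht ht
    simp only at h
    rw [hC_def, hp0_def]
    linarith
  -- threshold time
  obtain ⟨R, hR_def⟩ : ∃ R : ℝ, R = Real.sqrt (8 * |C|) := ⟨_, rfl⟩
  have hR0 : 0 ≤ R := by rw [hR_def]; exact Real.sqrt_nonneg _
  obtain ⟨T2, hT2_def⟩ : ∃ T2 : ℝ, T2 = max 0 (R / (c * p0)) := ⟨_, rfl⟩
  have hT20 : 0 ≤ T2 := by rw [hT2_def]; exact le_max_left _ _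
  have hK0 : K < u 0 + v 0 := by
    have := hub 0 le_rfl; have := hva 0 le_rfl; rw [hK_def]; linarith
  have hyR : ∀ t, T2 ≤ t → R ≤ u t + v t - K := by
    intro t ht
    have ht0 : 0 ≤ t := le_trans hT20 ht
    have h1 := hsge t ht0
    have h2 : R / (c * p0) ≤ t := by
      refine le_trans ?_ ht
      rw [hT2_def]; exact le_max_right _ _
    have hcp : 0 < c * p0 := mul_pos hc hp0
    have h3 : R ≤ c * p0 * t := by
      rw [div_le_iff₀ hcp] at h2; linarith
    linarith
  -- p ≥ y²/8 for t ≥ T2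
  have hp8 : ∀ t, T2 ≤ t → (u t + v t - K) ^ 2 / 8 ≤ u t * v t := by
    intro t ht
    have ht0 : 0 ≤ t := le_trans hT20 ht
    have h1 := hpq t ht0
    have h2 := hyR t ht
    have h3 : R ^ 2 = 8 * |C| := by
      rw [hR_def]; exact Real.sq_sqrt (by positivity)
    have h4 : R ^ 2 ≤ (u t + v t - K) ^ 2 := by
      apply pow_le_pow_left₀ hR0 h2
    have h5 := neg_abs_le C
    linarith
  -- final blowup contradiction via 1/y
  have hfin : MonotoneOn (fun t => -(u t + v t - K)⁻¹ - c / 8 * t) (Set.Ici T2) := by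
    apply mono_aux (f' := fun t =>
      (c * (2 * (u t * v t) - u t * a - v t * b)) / (u t + v t - K) ^ 2 - c / 8)
    · intro t ht
      have ht0 : 0 ≤ t := le_trans hT20 ht
      have hy := hyt t ht0
      have h1 := (((hs t ht0).sub_const K).inv hy.ne').neg
      have h2 := (hasDerivAt_id t).const_mul (c / 8)
      have h3 := h1.sub h2
      refine h3.congr_deriv ?_
      ring
    · intro t ht
      have ht0 : 0 ≤ t := le_trans hT20 ht
      have hy := hyt t ht0
      have hy2 : 0 < (u t + v t - K) ^ 2 := by positivity
      have h3 := (hpos t ht0).2.2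
      have h8 := hp8 t ht
      rw [sub_nonneg, le_div_iff₀ hy2]
      nlinarith
  -- pick the large time
  have hyT2 : 0 < u T2 + v T2 - K := hyt T2 hT20
  obtain ⟨q, hq_def⟩ : ∃ q : ℝ, q = (u T2 + v T2 - K)⁻¹ := ⟨_, rfl⟩
  have hq : 0 < q := by rw [hq_def]; positivity
  obtain ⟨t1, ht1_def⟩ : ∃ t1 : ℝ, t1 = T2 + 8 / c * q + 1 := ⟨_, rfl⟩
  have ht1 : T2 ≤ t1 := by
    have h : 0 ≤ 8 / c * q := by positivity
    rw [ht1_def]; linarith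
  have hyl : 0 < u t1 + v t1 - K := hyt t1 (le_trans hT20 ht1)
  have hmono := hfin (Set.self_mem_Ici) ht1 ht1
  simp only at hmono
  have hinv : 0 < (u t1 + v t1 - K)⁻¹ := by positivity
  have hcalc : c / 8 * t1 = c / 8 * T2 + q + c / 8 := by
    rw [ht1_def]
    field_simp
  rw [hcalc, ← hq_def] at hmono
  linarith
end

section
/- Let λ > 0, M,N ∈ ℝ, and let u,v be a maximal positive solution on [0,T), T < ∞, of ∂ₜu = 2λ²u(v−(M−N)²), ∂ₜv = 2λ²v(u−(M+N)²), with uv > u(M−N)²+v(M+N)² throughout, and suppose v(t) → +∞ as t → T. Then u(t) → +∞ as t → T as well, and moreover lim_{t→T} u(t)/v(t) = 1. -/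
open Filter Real Set

private lemma log_div_self_tendsto : Tendsto (fun x : ℝ => Real.log x / x) atTop (nhds 0) := by
  simpa using Real.tendsto_pow_log_div_mul_add_atTop 1 0 1 one_ne_zero

private lemma ev_log_le (c : ℝ) : ∀ᶠ x : ℝ in atTop, c * Real.log x ≤ x / 2 := by
  have h : Tendsto (fun x : ℝ => c * (Real.log x / x)) atTop (nhds 0) := by
    simpa using log_div_self_tendsto.const_mul c
  filter_upwards [h.eventually (eventually_le_nhds (by norm_num : (0:ℝ) < 1/2)),
    eventually_gt_atTop (0:ℝ)] with x hx hx0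
  have h2 : c * (Real.log x / x) * x ≤ 1/2 * x := mul_le_mul_of_nonneg_right hx hx0.le
  have h3 : c * (Real.log x / x) * x = c * Real.log x := by field_simp
  linarith

private lemma tendsto_sub_log (a : ℝ) :
    Tendsto (fun x : ℝ => x - a * Real.log x) atTop atTop := by
  refine tendsto_atTop_mono' _ ?_ (tendsto_id.atTop_div_const (by norm_num : (0:ℝ) < 2))
  filter_upwards [ev_log_le a] with x hx
  simp only [id]
  linarith

/-- For the reduced Type IIA flow ODE system on `[0,T)`, `T < ∞`, with the preserved
positivity conditions, if `v → +∞` at the singular time `T` then also `u → +∞` and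
moreover `u/v → 1`. -/
theorem stmt_17 (lam M N T : ℝ) (hlam : 0 < lam) (hT : 0 < T) (u v : ℝ → ℝ)
    (hu : ∀ t ∈ Set.Ico (0 : ℝ) T,
      HasDerivAt u (2 * lam ^ 2 * u t * (v t - (M - N) ^ 2)) t)
    (hv : ∀ t ∈ Set.Ico (0 : ℝ) T,
      HasDerivAt v (2 * lam ^ 2 * v t * (u t - (M + N) ^ 2)) t)
    (hpos : ∀ t ∈ Set.Ico (0 : ℝ) T, 0 < u t ∧ 0 < v t ∧
      u t * (M - N) ^ 2 + v t * (M + N) ^ 2 < u t * v t)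
    (hblow : Filter.Tendsto v (nhdsWithin T (Set.Iio T)) Filter.atTop) :
    Filter.Tendsto u (nhdsWithin T (Set.Iio T)) Filter.atTop ∧
    Filter.Tendsto (fun t => u t / v t) (nhdsWithin T (Set.Iio T)) (nhds 1) := by
  set a := (M - N) ^ 2 with ha
  set b := (M + N) ^ 2 with hb
  have ha0 : 0 ≤ a := sq_nonneg _
  have hb0 : 0 ≤ b := sq_nonneg _
  set l := nhdsWithin T (Set.Iio T) with hl
  -- v t > a on the interval
  have hva : ∀ t ∈ Set.Ico (0 : ℝ) T, a < v t := by
    intro t ht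
    obtain ⟨h1, h2, h3⟩ := hpos t ht
    nlinarith [mul_nonneg (le_of_lt h2) hb0]
  -- the conserved quantity Φ
  set Φ : ℝ → ℝ := fun t => u t - v t - b * Real.log (u t) + a * Real.log (v t) with hΦdef
  have hΦder : ∀ t ∈ Set.Ico (0 : ℝ) T, HasDerivAt Φ 0 t := by
    intro t ht
    obtain ⟨h1, h2, _⟩ := hpos t ht
    have hu' := hu t ht
    have hv' := hv t ht
    have hlogu : HasDerivAt (fun s => Real.log (u s))
        ((2 * lam ^ 2 * u t * (v t - a)) / u t) t := hu'.log h1.ne'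
    have hlogv : HasDerivAt (fun s => Real.log (v s))
        ((2 * lam ^ 2 * v t * (u t - b)) / v t) t := hv'.log h2.ne'
    have hD : HasDerivAt Φ
        (2 * lam ^ 2 * u t * (v t - a) - 2 * lam ^ 2 * v t * (u t - b)
          - b * ((2 * lam ^ 2 * u t * (v t - a)) / u t)
          + a * ((2 * lam ^ 2 * v t * (u t - b)) / v t)) t :=
      ((hu'.sub hv').sub (hlogu.const_mul b)).add (hlogv.const_mul a)
    have : (2 * lam ^ 2 * u t * (v t - a) - 2 * lam ^ 2 * v t * (u t - b)
          - b * ((2 * lam ^ 2 * u t * (v t - a)) / u t)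
          + a * ((2 * lam ^ 2 * v t * (u t - b)) / v t)) = 0 := by
      field_simp
      ring
    rwa [this] at hD
  -- conservation: Φ is constant
  have hcons : ∀ t ∈ Set.Ico (0 : ℝ) T, Φ t = Φ 0 := by
    intro t ht
    rcases eq_or_lt_of_le ht.1 with h0 | h0
    · rw [← h0]
    · have hsub : Set.Icc (0 : ℝ) t ⊆ Set.Ico 0 T :=
        fun s hs => ⟨hs.1, lt_of_le_of_lt hs.2 ht.2⟩
      have hcont : ContinuousOn Φ (Set.Icc 0 t) := fun s hs =>
        (hΦder s (hsub hs)).continuousAt.continuousWithinAt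
      obtain ⟨c, _, hc⟩ := exists_hasDerivAt_eq_slope Φ (fun _ => 0) h0 hcont
        (fun s hs => hΦder s (hsub ⟨hs.1.le, hs.2.le⟩))
      have ht0 : t - 0 ≠ 0 := by simpa using h0.ne'
      field_simp at hc
      linarith
  -- u is nondecreasing from u 0
  have humono : ∀ t ∈ Set.Ico (0 : ℝ) T, u 0 ≤ u t := by
    intro t ht
    rcases eq_or_lt_of_le ht.1 with h0 | h0
    · rw [← h0]
    · have hsub : Set.Icc (0 : ℝ) t ⊆ Set.Ico 0 T :=
        fun s hs => ⟨hs.1, lt_of_le_of_lt hs.2 ht.2⟩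
      have hcont : ContinuousOn u (Set.Icc 0 t) := fun s hs =>
        (hu s (hsub hs)).continuousAt.continuousWithinAt
      obtain ⟨c, hcmem, hc⟩ := exists_hasDerivAt_eq_slope u
        (fun s => 2 * lam ^ 2 * u s * (v s - a)) h0 hcont
        (fun s hs => hu s (hsub ⟨hs.1.le, hs.2.le⟩))
      have hcI : c ∈ Set.Ico (0 : ℝ) T := hsub ⟨hcmem.1.le, hcmem.2.le⟩
      have hup : 0 < u c := (hpos c hcI).1
      have hvc : a < v c := hva c hcI
      have hpos' : 0 < 2 * lam ^ 2 * u c * (v c - a) :=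
        mul_pos (by positivity) (sub_pos.mpr hvc)
      rw [hc] at hpos'
      have := (div_pos_iff.mp hpos')
      rcases this with ⟨h1, _⟩ | ⟨_, h2⟩
      · linarith
      · linarith
  have hu0pos : 0 < u 0 := (hpos 0 ⟨le_refl 0, hT⟩).1
  have hΦ0 : Φ 0 = u 0 - v 0 - b * Real.log (u 0) + a * Real.log (v 0) := rfl
  -- eventual membership in the interval
  have hev : ∀ᶠ t in l, t ∈ Set.Ico (0 : ℝ) T := by
    filter_upwards [mem_nhdsWithin_of_mem_nhds (Ioi_mem_nhds hT), self_mem_nhdsWithin]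
      with t h1 h2
    exact ⟨le_of_lt h1, h2⟩
  -- first conclusion : u → atTop
  have hkey1 : ∀ᶠ t in l, v t - a * Real.log (v t) + (Φ 0 + b * Real.log (u 0)) ≤ u t := by
    filter_upwards [hev] with t ht
    have hid := hcons t ht
    have hlog : b * Real.log (u 0) ≤ b * Real.log (u t) :=
      mul_le_mul_of_nonneg_left (Real.log_le_log hu0pos (humono t ht)) hb0
    simp only [hΦdef] at hid
    rw [hΦ0]
    linarith
  have hulim : Tendsto u l atTop := by
    refine tendsto_atTop_mono' _ hkey1 ?_
    exact (tendsto_atTop_add_const_right _ _ ((tendsto_sub_log a).comp hblow))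
  refine ⟨hulim, ?_⟩
  -- second conclusion : u / v → 1
  have t1 : Tendsto (fun t => (v t)⁻¹) l (nhds 0) := tendsto_inv_atTop_zero.comp hblow
  have h2 : Tendsto (fun t => Real.log (v t) / v t) l (nhds 0) :=
    log_div_self_tendsto.comp hblow
  set K : ℝ := 2 + 2 * |Φ 0| with hK
  have hK2 : (2 : ℝ) ≤ K := by
    have := abs_nonneg (Φ 0); simp only [hK]; linarith
  have hKpos : 0 < K := lt_of_lt_of_le two_pos hK2
  -- eventually u t ≤ K * v t
  have hevb : ∀ᶠ t in l, u t ≤ K * v t ∧ 1 ≤ u t ∧ 1 ≤ v t := by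
    filter_upwards [hev, hulim.eventually (ev_log_le b), hulim.eventually_ge_atTop 1,
      hblow.eventually_ge_atTop 1] with t ht hblog hu1 hv1
    refine ⟨?_, hu1, hv1⟩
    have hid := hcons t ht
    simp only [hΦdef] at hid
    have hlogv : 0 ≤ a * Real.log (v t) :=
      mul_nonneg ha0 (Real.log_nonneg hv1)
    have h1 : u t ≤ 2 * v t + 2 * Φ 0 := by rw [hΦ0]; linarith
    nlinarith [le_abs_self (Φ 0), abs_nonneg (Φ 0)]
  have h3 : Tendsto (fun t => Real.log (u t) / v t) l (nhds 0) := by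
    have hh : Tendsto (fun t => Real.log K / v t + Real.log (v t) / v t) l (nhds 0) := by
      have : Tendsto (fun t => Real.log K * (v t)⁻¹ + Real.log (v t) / v t) l
          (nhds (Real.log K * 0 + 0)) := (t1.const_mul _).add h2
      simpa [div_eq_mul_inv] using this
    refine tendsto_of_tendsto_of_tendsto_of_le_of_le' tendsto_const_nhds hh ?_ ?_
    · filter_upwards [hevb, hblow.eventually_gt_atTop 0] with t ht hv0
      exact div_nonneg (Real.log_nonneg ht.2.1) hv0.le
    · filter_upwards [hevb, hblow.eventually_gt_atTop 0] with t ht hv0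
      have h1 : Real.log (u t) ≤ Real.log (K * v t) :=
        Real.log_le_log (lt_of_lt_of_le one_pos ht.2.1) ht.1
      rw [Real.log_mul hKpos.ne' (by linarith [ht.2.2] : v t ≠ 0)] at h1
      rw [← add_div]
      have hvpos : (0:ℝ) < v t := hv0
      gcongr
  -- assemble
  have hfinal : Tendsto (fun t => 1 + Φ 0 * (v t)⁻¹ + b * (Real.log (u t) / v t)
      - a * (Real.log (v t) / v t)) l (nhds 1) := by
    have : Tendsto (fun t => 1 + Φ 0 * (v t)⁻¹ + b * (Real.log (u t) / v t)
        - a * (Real.log (v t) / v t)) l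
        (nhds (1 + Φ 0 * 0 + b * 0 - a * 0)) :=
      ((tendsto_const_nhds.add (t1.const_mul _)).add (h3.const_mul b)).sub (h2.const_mul a)
    simpa using this
  refine hfinal.congr' ?_
  filter_upwards [hev, hblow.eventually_gt_atTop 0] with t ht hv0
  have hid := hcons t ht
  simp only [hΦdef] at hid
  field_simp
  ring_nf
  ring_nf at hid
  linarith
end
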